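/- arXiv:2512.15356 — 11 statements merged into one kernel-verified Lean document; each statement's English description precedes it below -/
import Mathlib

section
/- Let D_t = (d_1, …, d_n) be a sequence of nonnegative integers with t dividing d_1 + ⋯ + d_n, and define d_{n+1} = (d_1 + ⋯ + d_n)/t. If D_t has a realization as a simple t-uniform hypergraph on n vertices, then the sequence D_{t+1} = (d_1, …, d_n, d_{n+1}) has a realization as a simple (t+1)-uniform hypergraph on n+1 vertices. -/
/-- Degree of a vertex in a hypergraph given as a finite set of edges. -/
def hdeg {V : Type*} [DecidableEq V] (H : Finset (Finset V)) (v : V) : ℕ :=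
  (H.filter (fun e => v ∈ e)).card

lemma sum_hdeg {n : ℕ} (H : Finset (Finset (Fin n))) :
    ∑ v, hdeg H v = ∑ e ∈ H, e.card := by
  simp only [hdeg, Finset.card_filter]
  rw [Finset.sum_comm]
  refine Finset.sum_congr rfl fun e _ => ?_
  rw [← Finset.card_filter]
  congr 1
  ext v
  simp

/-- If `D` has a simple `t`-uniform realization on `n` vertices and `t` divides the degree
sum, then appending the degree `(∑ D)/t` gives a sequence realizable as a simple
`(t+1)`-uniform hypergraph on `n+1` vertices. -/
theorem t_uniform_to_succ_uniform (n t : ℕ) (D : Fin n → ℕ)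
    (hdvd : t ∣ ∑ i, D i)
    (H : Finset (Finset (Fin n))) (hH : ∀ e ∈ H, e.card = t)
    (hdegH : ∀ v, hdeg H v = D v) :
    ∃ H' : Finset (Finset (Fin (n + 1))),
      (∀ e ∈ H', e.card = t + 1) ∧
      (∀ v, hdeg H' v = (Fin.snoc D ((∑ i, D i) / t) : Fin (n + 1) → ℕ) v) := by
  have hsum : ∑ i, D i = t * H.card := by
    rw [show ∑ i, D i = ∑ v, hdeg H v from
      Finset.sum_congr rfl (fun v _ => (hdegH v).symm), sum_hdeg,
      Finset.sum_congr rfl hH, Finset.sum_const, smul_eq_mul, mul_comm]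
  rcases Nat.eq_zero_or_pos t with ht | ht
  · -- t = 0 : all degrees are 0, take H' = ∅
    subst ht
    have hD : ∀ v, D v = 0 := by
      intro v
      have h0 : ∑ i, D i = 0 := by simpa using hsum
      exact Finset.sum_eq_zero_iff.mp h0 v (Finset.mem_univ v)
    refine ⟨∅, by simp, ?_⟩
    intro v
    have : (∑ i, D i) = 0 := by simp [hD]
    refine Fin.lastCases ?_ ?_ v
    · simp [hdeg, this]
    · intro i; simp [hdeg, hD]
  · -- t > 0
    have hcard : (∑ i, D i) / t = H.card := by
      rw [hsum, Nat.mul_div_cancel_left _ ht]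
    set f : Finset (Fin n) → Finset (Fin (n + 1)) :=
      fun e => insert (Fin.last n) (e.image Fin.castSucc) with hf
    have hlast_not : ∀ e : Finset (Fin n), Fin.last n ∉ e.image Fin.castSucc := by
      intro e he
      obtain ⟨i, _, hi⟩ := Finset.mem_image.mp he
      exact absurd hi (Fin.castSucc_lt_last i).ne
    have hfinj : Function.Injective f := by
      intro a b hab
      have : a.image Fin.castSucc = b.image Fin.castSucc := by
        have h1 := congrArg (Finset.erase · (Fin.last n)) hab
        simpa [hf, Finset.erase_insert (hlast_not a),
          Finset.erase_insert (hlast_not b)] using h1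
      exact Finset.image_injective (Fin.castSucc_injective n) this
    refine ⟨H.image f, ?_, ?_⟩
    · intro e he
      obtain ⟨a, ha, rfl⟩ := Finset.mem_image.mp he
      rw [hf]
      rw [Finset.card_insert_of_notMem (hlast_not a),
        Finset.card_image_of_injective _ (Fin.castSucc_injective n), hH a ha]
    · intro v
      have hfilter : ∀ p : Finset (Fin (n+1)) → Prop, [DecidablePred p] →
          ((H.image f).filter p).card = (H.filter (fun e => p (f e))).card := by
        intro p _
        rw [← Finset.card_image_of_injective (H.filter (fun e => p (f e))) hfinj,
          Finset.filter_image]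
      refine Fin.lastCases ?_ ?_ v
      · -- new vertex: in every edge
        simp only [Fin.snoc_last, hcard, hdeg]
        rw [hfilter]
        have : (fun e => Fin.last n ∈ f e) = fun _ => True := by
          funext e; simp [hf]
        simp [this]
      · intro i
        simp only [Fin.snoc_castSucc, hdeg]
        rw [hfilter]
        have : ∀ e : Finset (Fin n), (Fin.castSucc i ∈ f e) ↔ i ∈ e := by
          intro e
          simp only [hf, Finset.mem_insert, Finset.mem_image]
          constructor
          · rintro (h | ⟨j, hj, hji⟩)
            · exact absurd h (Fin.castSucc_lt_last i).ne
            · rwa [← Fin.castSucc_injective n hji]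
          · intro h; exact Or.inr ⟨i, h, rfl⟩
        rw [← hdegH i, hdeg]
        congr 1
        apply Finset.filter_congr
        intro e _; simp [this e]
end

section
/- Let D_t = (d_1, …, d_n) be a sequence of nonnegative integers with t dividing d_1 + ⋯ + d_n, and define d_{n+1} = (d_1 + ⋯ + d_n)/t. If the sequence (d_1, …, d_n, d_{n+1}) has a realization as a simple (t+1)-uniform hypergraph on n+1 vertices, then D_t has a realization as a simple t-uniform hypergraph on n vertices. -/
/-- If the sequence `(d_1, …, d_n, (∑ d_i)/t)` has a simple `(t+1)`-uniform realization
on `n+1` vertices, then `(d_1, …, d_n)` has a simple `t`-uniform realization on `n`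
vertices. -/
theorem succ_uniform_to_t_uniform (n t : ℕ) (D : Fin n → ℕ)
    (hdvd : t ∣ ∑ i, D i)
    (H' : Finset (Finset (Fin (n + 1)))) (hH' : ∀ e ∈ H', e.card = t + 1)
    (hdegH' : ∀ v, hdeg H' v = (Fin.snoc D ((∑ i, D i) / t) : Fin (n + 1) → ℕ) v) :
    ∃ H : Finset (Finset (Fin n)),
      (∀ e ∈ H, e.card = t) ∧ (∀ v, hdeg H v = D v) := by
  set m := (∑ i, D i) / t with hm
  have hsumD : ∑ i, D i = m * t := (Nat.div_mul_cancel hdvd).symm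
  have htot : ∑ v : Fin (n+1), hdeg H' v = H'.card * (t + 1) := by
    have key : ∀ e ∈ H', (∑ v : Fin (n+1), if v ∈ e then 1 else 0) = t + 1 := by
      intro e he
      rw [← Finset.card_filter, Finset.filter_univ_mem, hH' e he]
    unfold hdeg
    simp only [Finset.card_filter]
    rw [Finset.sum_comm, Finset.sum_congr rfl key, Finset.sum_const, smul_eq_mul]
  have htot2 : ∑ v : Fin (n+1), hdeg H' v = m * (t+1) := by
    simp only [hdegH']
    rw [Fin.sum_univ_castSucc]
    simp only [Fin.snoc_castSucc, Fin.snoc_last, ← hm, hsumD]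
    ring
  have hcard : H'.card = m :=
    Nat.eq_of_mul_eq_mul_right (Nat.succ_pos t) (htot.symm.trans htot2)
  have hdlast : hdeg H' (Fin.last n) = m := by
    have := hdegH' (Fin.last n)
    simpa [Fin.snoc_last] using this
  have hfl : H'.filter (fun e => Fin.last n ∈ e) = H' := by
    apply Finset.eq_of_subset_of_card_le (Finset.filter_subset _ _)
    rw [show (H'.filter (fun e => Fin.last n ∈ e)).card = m from hdlast, hcard]
  have hlast : ∀ e ∈ H', Fin.last n ∈ e := by
    intro e he
    rw [← hfl] at he
    exact (Finset.mem_filter.mp he).2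
  have hinj : Function.Injective (Fin.castSucc : Fin n → Fin (n+1)) :=
    Fin.castSucc_injective n
  set f : Finset (Fin (n+1)) → Finset (Fin n) :=
    fun e => e.preimage Fin.castSucc hinj.injOn with hf
  have hrec : ∀ e ∈ H', e = insert (Fin.last n) ((f e).image Fin.castSucc) := by
    intro e he
    ext x
    simp only [Finset.mem_insert, Finset.mem_image, Finset.mem_preimage, hf]
    constructor
    · intro hx
      rcases eq_or_ne x (Fin.last n) with h | h
      · exact Or.inl h
      · exact Or.inr ⟨x.castPred h, by rwa [Fin.castSucc_castPred], Fin.castSucc_castPred x h⟩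
    · rintro (rfl | ⟨j, hj, rfl⟩)
      · exact hlast e he
      · exact hj
  have hlastnotmem : ∀ e : Finset (Fin (n+1)),
      Fin.last n ∉ (f e).image Fin.castSucc := by
    intro e h
    obtain ⟨j, _, hj⟩ := Finset.mem_image.mp h
    exact (Fin.castSucc_lt_last j).ne hj
  have hinjOn : Set.InjOn f H' := by
    intro e he e' he' hee
    rw [hrec e he, hrec e' he', hee]
  refine ⟨H'.image f, ?_, ?_⟩
  · intro e he
    obtain ⟨e', he', rfl⟩ := Finset.mem_image.mp he
    have h1 : e'.card = (f e').card + 1 := by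
      conv_lhs => rw [hrec e' he']
      rw [Finset.card_insert_of_notMem (hlastnotmem e'),
        Finset.card_image_of_injective _ hinj]
    have := hH' e' he'
    omega
  · intro v
    unfold hdeg
    have hfilt : (H'.image f).filter (fun e => v ∈ e)
        = (H'.filter (fun e => v.castSucc ∈ e)).image f := by
      rw [Finset.filter_image]
      congr 1
      ext e
      simp [hf, Finset.mem_preimage]
    rw [hfilt, Finset.card_image_of_injOn
      (hinjOn.mono (fun e he => (Finset.filter_subset _ _) he)),
      ← hdeg]
    have := hdegH' v.castSucc
    simpa [Fin.snoc_castSucc] using this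
end

section
/- Let H = (V, E) be a simple t-uniform hypergraph and let U ⊆ V. Then there exists a simple t-uniform hypergraph H' on V such that: (i) every vertex v ∈ V \ U has the same degree in H' as in H; (ii) the sum of degrees over U is the same in H and H'; and (iii) the degrees of vertices of U in H' are almost regular, i.e., all lie in {k, k+1} for some integer k. -/
open Finset

section Transfer

variable {ι : Type*} [DecidableEq ι] {U : Finset ι} {f g : ι → ℕ} {u w : ι}

-- The hypothesis `hg` below says `g = f - 𝟙_u + 𝟙_w`, written without truncated subtraction.

lemma sum_eq_of_transfer (hu : u ∈ U) (hw : w ∈ U)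
    (hg : ∀ v, g v + (if v = u then 1 else 0) = f v + (if v = w then 1 else 0)) :
    ∑ v ∈ U, g v = ∑ v ∈ U, f v := by
  have h := sum_congr rfl fun v (_ : v ∈ U) => hg v
  simp only [sum_add_distrib, sum_ite_eq', hu, hw, if_true] at h
  omega

lemma sum_sq_lt_of_transfer (hu : u ∈ U) (hw : w ∈ U) (hgap : f w + 2 ≤ f u)
    (hg : ∀ v, g v + (if v = u then 1 else 0) = f v + (if v = w then 1 else 0)) :
    ∑ v ∈ U, g v ^ 2 < ∑ v ∈ U, f v ^ 2 := by
  have hne : w ≠ u := by rintro rfl; omega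
  have hwu : w ∈ U.erase u := mem_erase.2 ⟨hne, hw⟩
  have hrest : ∑ v ∈ (U.erase u).erase w, g v ^ 2 = ∑ v ∈ (U.erase u).erase w, f v ^ 2 :=
    sum_congr rfl fun v hv => by
      obtain ⟨hvw, hvu, -⟩ : v ≠ w ∧ v ≠ u ∧ v ∈ U := by simpa using hv
      rw [show g v = f v by simpa [hvu, hvw] using hg v]
  have hgu := hg u
  have hgw := hg w
  simp only [if_true, hne, hne.symm, if_false] at hgu hgw
  rw [← add_sum_erase U _ hu, ← add_sum_erase _ _ hwu, ← add_sum_erase U _ hu,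
    ← add_sum_erase _ _ hwu, hrest]
  nlinarith

end Transfer

lemma exists_add_two_le_of_not_almost_regular {ι : Type*} {d : ι → ℕ} {U : Finset ι}
    (h : ¬ ∃ k : ℕ, ∀ v ∈ U, d v = k ∨ d v = k + 1) :
    ∃ u ∈ U, ∃ w ∈ U, d w + 2 ≤ d u := by
  obtain ⟨w, hw, hmin⟩ := U.exists_min_image d <| nonempty_iff_ne_empty.2 <| by
    rintro rfl
    simp at h
  push Not at h
  obtain ⟨u, hu, hu₀, hu₁⟩ := h (d w)
  exact ⟨u, hu, w, hw, by have := hmin u hu; omega⟩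

section Switch

variable {V : Type*} [DecidableEq V]

lemma hdeg_erase_add (H : Finset (Finset V)) {e : Finset V} (he : e ∈ H) (v : V) :
    hdeg (H.erase e) v + (if v ∈ e then 1 else 0) = hdeg H v := by
  unfold hdeg
  rw [filter_erase]
  split_ifs with hv
  · exact card_erase_add_one (mem_filter.2 ⟨he, hv⟩)
  · rw [erase_eq_of_notMem (a := e) fun h => hv (mem_filter.1 h).2, add_zero]

lemma hdeg_insert (H : Finset (Finset V)) {e : Finset V} (he : e ∉ H) (v : V) :
    hdeg (insert e H) v = hdeg H v + (if v ∈ e then 1 else 0) := by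
  unfold hdeg
  rw [filter_insert]
  split_ifs
  · exact card_insert_of_notMem fun h => he (mem_filter.1 h).1
  · rfl

lemma hdeg_eq_card_add_card (H : Finset (Finset V)) (u w : V) :
    hdeg H u = #{e ∈ H | u ∈ e ∧ w ∉ e} + #{e ∈ H | u ∈ e ∧ w ∈ e} := by
  rw [hdeg, ← filter_filter, ← filter_filter, add_comm]
  exact (card_filter_add_card_filter_not _).symm

lemma insert_erase_insert_erase {u w : V} {e : Finset V} (hu : u ∈ e) (hw : w ∉ e) :
    insert u ((insert w (e.erase u)).erase w) = e := by
  rw [erase_insert fun h => hw (mem_of_mem_erase h), insert_erase hu]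

lemma card_insert_erase_of_mem_of_notMem {u w : V} {e : Finset V} (hu : u ∈ e) (hw : w ∉ e) :
    #(insert w (e.erase u)) = #e := by
  rw [card_insert_of_notMem fun h => hw (mem_of_mem_erase h), card_erase_add_one hu]

lemma exists_switchable_edge {H : Finset (Finset V)} {u w : V} (h : hdeg H w < hdeg H u) :
    ∃ e ∈ H, u ∈ e ∧ w ∉ e ∧ insert w (e.erase u) ∉ H := by
  by_contra! hcon
  have hinj : #{e ∈ H | u ∈ e ∧ w ∉ e} ≤ #{e ∈ H | w ∈ e ∧ u ∉ e} := by
    refine card_le_card_of_injOn (fun e => insert w (e.erase u)) ?_ ?_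
    · intro e he
      obtain ⟨he, hu, hw⟩ := mem_filter.1 he
      have huw : u ≠ w := fun h => hw (h ▸ hu)
      simp [hcon e he hu hw, huw, huw.symm]
    · intro e₁ he₁ e₂ he₂ heq
      obtain ⟨-, hu₁, hw₁⟩ := mem_filter.1 he₁
      obtain ⟨-, hu₂, hw₂⟩ := mem_filter.1 he₂
      rw [← insert_erase_insert_erase hu₁ hw₁, ← insert_erase_insert_erase hu₂ hw₂]
      exact congrArg (fun s => insert u (s.erase w)) heq
  have hboth : #{e ∈ H | w ∈ e ∧ u ∈ e} = #{e ∈ H | u ∈ e ∧ w ∈ e} := by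
    simp only [and_comm]
  rw [hdeg_eq_card_add_card H u w, hdeg_eq_card_add_card H w u] at h
  omega

def switchEdge (H : Finset (Finset V)) (e : Finset V) (u w : V) : Finset (Finset V) :=
  insert (insert w (e.erase u)) (H.erase e)

lemma hdeg_switchEdge {H : Finset (Finset V)} {e : Finset V} {u w : V} (he : e ∈ H)
    (hu : u ∈ e) (hw : w ∉ e) (he' : insert w (e.erase u) ∉ H) (v : V) :
    hdeg (switchEdge H e u w) v + (if v = u then 1 else 0)
      = hdeg H v + (if v = w then 1 else 0) := by
  have hins := hdeg_insert (H.erase e) (fun h => he' (mem_of_mem_erase h)) v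
  have hera := hdeg_erase_add H he v
  rw [switchEdge, hins, ← hera]
  by_cases hvu : v = u
  · subst hvu
    have hwv : w ≠ v := fun h => hw (h ▸ hu)
    simp [hu, hwv.symm]
  · by_cases hvw : v = w
    · subst hvw
      simp [hw, hvu]
    · simp [hvu, hvw]

lemma card_of_mem_switchEdge {H : Finset (Finset V)} {t : ℕ} (hH : ∀ e ∈ H, #e = t)
    {e : Finset V} {u w : V} (he : e ∈ H) (hu : u ∈ e) (hw : w ∉ e) :
    ∀ f ∈ switchEdge H e u w, #f = t := by
  intro f hf
  rcases mem_insert.1 hf with rfl | hf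
  · rw [card_insert_erase_of_mem_of_notMem hu hw, hH e he]
  · exact hH f (mem_of_mem_erase hf)

end Switch

/-- Given a simple `t`-uniform hypergraph `H` and a vertex subset `U`, there is a simple
`t`-uniform hypergraph `H'` with the same degrees outside `U`, the same degree sum over
`U`, and almost regular degrees on `U`. -/
theorem exists_almost_regular_on_subset (n t : ℕ) (H : Finset (Finset (Fin n)))
    (hH : ∀ e ∈ H, e.card = t) (U : Finset (Fin n)) :
    ∃ H' : Finset (Finset (Fin n)),
      (∀ e ∈ H', e.card = t) ∧
      (∀ v ∉ U, hdeg H' v = hdeg H v) ∧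
      (∑ v ∈ U, hdeg H' v = ∑ v ∈ U, hdeg H v) ∧
      (∃ k : ℕ, ∀ v ∈ U, hdeg H' v = k ∨ hdeg H' v = k + 1) := by
  induction hN : ∑ v ∈ U, hdeg H v ^ 2 using Nat.strong_induction_on generalizing H with
  | _ N ih =>
  by_cases hreg : ∃ k : ℕ, ∀ v ∈ U, hdeg H v = k ∨ hdeg H v = k + 1
  · exact ⟨H, hH, fun _ _ => rfl, rfl, hreg⟩
  obtain ⟨u, hu, w, hw, hgap⟩ := exists_add_two_le_of_not_almost_regular hreg
  obtain ⟨e, he, hue, hwe, he'⟩ := exists_switchable_edge (show hdeg H w < hdeg H u by omega)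
  have hdeg' := hdeg_switchEdge he hue hwe he'
  obtain ⟨H', hH', hout, hsum, hreg'⟩ :=
    ih _ (hN ▸ sum_sq_lt_of_transfer hu hw hgap hdeg') _
      (card_of_mem_switchEdge hH he hue hwe) rfl
  refine ⟨H', hH', fun v hv => ?_, hsum.trans (sum_eq_of_transfer hu hw hdeg'), hreg'⟩
  rw [hout v hv]
  simpa [show v ≠ u from fun h => hv (h ▸ hu), show v ≠ w from fun h => hv (h ▸ hw)]
    using hdeg' v
end

section
/- Let t ≥ 3, s > 0, d > 0, m > 0 be integers with C(m, t−1) ≥ d, and set k = m·⌈s·d·(t−1)/m⌉ − s·d·(t−1). Then the degree sequence consisting of s copies of d, k copies of ⌊s·d·(t−1)/m⌋, and m − k copies of ⌈s·d·(t−1)/m⌉ has a simple t-uniform hypergraph realization H in which every edge contains exactly one vertex of the first group (those with prescribed degree d) and t−1 vertices of the second group. -/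
open Finset

section Exchange

variable {α : Type*} [DecidableEq α]

def exchange (X : Finset α) (u v : α) : Finset α := insert v (X.erase u)

theorem card_exchange {X : Finset α} {u v : α} (hu : u ∈ X) (hv : v ∉ X) :
    #(exchange X u v) = #X := by
  rw [exchange, card_insert_of_notMem fun h => hv (mem_of_mem_erase h), card_erase_add_one hu]

theorem insert_erase_exchange {X : Finset α} {u v : α} (hu : u ∈ X) (hv : v ∉ X) :
    insert u ((exchange X u v).erase v) = X := by
  rw [exchange, erase_insert fun h => hv (mem_of_mem_erase h), insert_erase hu]

theorem hdeg_le_hdeg_of_exchange_mem {F : Finset (Finset α)} {u v : α}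
    (hF : ∀ X ∈ F, u ∈ X → v ∉ X → exchange X u v ∈ F) : hdeg F u ≤ hdeg F v := by
  -- sets containing both `u` and `v` count for both; `exchange · u v` injects those containing
  -- only `u` into those containing only `v`
  have hsplit : ∀ a b : α, hdeg F a = #{X ∈ F | a ∈ X ∧ b ∈ X} + #{X ∈ F | a ∈ X ∧ b ∉ X} :=
    fun a b => by rw [hdeg, ← filter_filter, ← filter_filter, card_filter_add_card_filter_not]
  have hboth : #{X ∈ F | u ∈ X ∧ v ∈ X} = #{X ∈ F | v ∈ X ∧ u ∈ X} := by simp_rw [and_comm]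
  have honly : #{X ∈ F | u ∈ X ∧ v ∉ X} ≤ #{X ∈ F | v ∈ X ∧ u ∉ X} := by
    refine card_le_card_of_injOn (exchange · u v) (fun X hX => ?_) (fun X hX Y hY hXY => ?_)
    · simp only [coe_filter, Set.mem_ofPred_eq] at hX ⊢
      obtain ⟨hXF, hu, hv⟩ := hX
      have huv : u ≠ v := fun h => hv (h ▸ hu)
      exact ⟨hF X hXF hu hv, mem_insert_self v _, by simp [exchange, huv]⟩
    · simp only [coe_filter, Set.mem_ofPred_eq] at hX hY
      rw [← insert_erase_exchange hX.2.1 hX.2.2, ← insert_erase_exchange hY.2.1 hY.2.2]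
      exact congrArg (fun Z => insert u (Z.erase v)) hXY
  rw [hsplit u v, hsplit v u]
  omega

theorem hdeg_insert_erase_add {F : Finset (Finset α)} {X Y : Finset α} (hX : X ∈ F) (hY : Y ∉ F)
    (w : α) :
    hdeg (insert Y (F.erase X)) w + (if w ∈ X then 1 else 0) =
      hdeg F w + (if w ∈ Y then 1 else 0) := by
  have hY' : Y ∉ {Z ∈ F | w ∈ Z}.erase X := fun h => hY (mem_filter.1 (mem_of_mem_erase h)).1
  rw [hdeg, hdeg, filter_insert, filter_erase, apply_ite card, card_insert_of_notMem hY']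
  by_cases hwX : w ∈ X
  · have hcard := card_erase_add_one (show X ∈ {Z ∈ F | w ∈ Z} from mem_filter.2 ⟨hX, hwX⟩)
    split_ifs <;> omega
  · have hX' : X ∉ {Z ∈ F | w ∈ Z} := fun h => hwX (mem_filter.1 h).2
    rw [erase_eq_of_notMem hX']
    split_ifs <;> omega

end Exchange

theorem sum_sq_lt_of_transfer_s7 {α : Type*} [DecidableEq α] {s : Finset α} {f g : α → ℕ}
    {u v : α} (hu : u ∈ s) (hv : v ∈ s) (huv : u ≠ v) (hgu : g u + 1 = f u)
    (hgv : g v = f v + 1) (hgw : ∀ w ∈ s, w ≠ u → w ≠ v → g w = f w) (hfuv : f v + 1 < f u) :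
    ∑ w ∈ s, g w ^ 2 < ∑ w ∈ s, f w ^ 2 := by
  have hv' : v ∈ s.erase u := mem_erase.2 ⟨huv.symm, hv⟩
  have hrest : ∑ w ∈ (s.erase u).erase v, g w ^ 2 = ∑ w ∈ (s.erase u).erase v, f w ^ 2 :=
    sum_congr rfl fun w hw => by
      obtain ⟨hwv, hwu, hws⟩ := by simpa using hw
      rw [hgw w hws hwu hwv]
  rw [← add_sum_erase s _ hu, ← add_sum_erase _ _ hv', ← add_sum_erase s _ hu,
    ← add_sum_erase _ _ hv', hrest]
  nlinarith

section TotalDegree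

variable {ι α : Type*} [Fintype ι] [DecidableEq α]

def totalDeg (G : ι → Finset (Finset α)) (a : α) : ℕ := ∑ i, hdeg (G i) a

theorem totalDeg_update_add [DecidableEq ι] (G : ι → Finset (Finset α)) (i : ι)
    (F : Finset (Finset α)) (a : α) :
    totalDeg (Function.update G i F) a + hdeg (G i) a = totalDeg G a + hdeg F a := by
  simp only [totalDeg, Function.apply_update (fun _ F => hdeg F a),
    sum_update_of_mem (mem_univ i), ← add_sum_erase _ _ (mem_univ i), sdiff_singleton_eq_erase]
  ring

theorem exists_exchange_of_totalDeg_lt (G : ι → Finset (Finset α)) {u v : α}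
    (h : totalDeg G v < totalDeg G u) :
    ∃ i, ∃ X ∈ G i, u ∈ X ∧ v ∉ X ∧ exchange X u v ∉ G i := by
  by_contra! hG
  exact h.not_ge (sum_le_sum fun i _ => hdeg_le_hdeg_of_exchange_mem (hG i))

variable [Fintype α] [DecidableEq ι]

theorem exists_sum_sq_totalDeg_lt {r : ℕ} (G : ι → Finset (Finset α))
    (hG : ∀ i, ∀ X ∈ G i, #X = r) {u v : α} (huv : totalDeg G v + 1 < totalDeg G u) :
    ∃ G' : ι → Finset (Finset α), (∀ i, #(G' i) = #(G i)) ∧ (∀ i, ∀ X ∈ G' i, #X = r) ∧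
      ∑ a, totalDeg G' a ^ 2 < ∑ a, totalDeg G a ^ 2 := by
  obtain ⟨i, X, hX, hu, hv, hY⟩ := exists_exchange_of_totalDeg_lt G (u := u) (v := v) (by omega)
  have hne : u ≠ v := fun h => hv (h ▸ hu)
  set G' := Function.update G i (insert (exchange X u v) ((G i).erase X)) with hG'
  have hdeg' (a : α) : totalDeg G' a + (if a ∈ X then 1 else 0) =
      totalDeg G a + (if a ∈ exchange X u v then 1 else 0) := by
    have h₁ : totalDeg G' a + hdeg (G i) a = _ := totalDeg_update_add G i _ a
    have h₂ := hdeg_insert_erase_add hX hY a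
    omega
  refine ⟨G', fun j => ?_, fun j Y hYj => ?_, ?_⟩
  · rcases eq_or_ne j i with rfl | hj
    · rw [hG', Function.update_self, card_insert_of_notMem fun h => hY (mem_of_mem_erase h),
        card_erase_add_one hX]
    · rw [hG', Function.update_of_ne hj]
  · rcases eq_or_ne j i with rfl | hj
    · rw [hG', Function.update_self, mem_insert] at hYj
      rcases hYj with rfl | hYj
      · rw [card_exchange hu hv, hG j X hX]
      · exact hG j Y (mem_of_mem_erase hYj)
    · rw [hG', Function.update_of_ne hj] at hYj
      exact hG j Y hYj
  · refine sum_sq_lt_of_transfer_s7 (mem_univ u) (mem_univ v) hne ?_ ?_ (fun w _ hwu hwv => ?_) huv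
    · simpa [exchange, hu, hne] using hdeg' u
    · simpa [exchange, hv] using hdeg' v
    · simpa [exchange, hwu, hwv] using hdeg' w

theorem exists_equitableOn_totalDeg {r : ℕ} (G₀ : ι → Finset (Finset α))
    (hG₀ : ∀ i, ∀ X ∈ G₀ i, #X = r) :
    ∃ G : ι → Finset (Finset α), (∀ i, #(G i) = #(G₀ i)) ∧ (∀ i, ∀ X ∈ G i, #X = r) ∧
      Set.univ.EquitableOn (totalDeg G) := by
  classical
  obtain ⟨G, hG, hmin⟩ := exists_min_image
    {G : ι → Finset (Finset α) | (∀ i, #(G i) = #(G₀ i)) ∧ ∀ i, ∀ X ∈ G i, #X = r}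
    (fun G => ∑ a, totalDeg G a ^ 2) ⟨G₀, by simpa using hG₀⟩
  obtain ⟨hGcard, hGsize⟩ := (mem_filter.1 hG).2
  refine ⟨G, hGcard, hGsize, ?_⟩
  by_contra hbal
  obtain ⟨u, -, v, -, huv⟩ := Set.not_equitableOn.1 hbal
  obtain ⟨G', hcard', hsize', hlt⟩ := exists_sum_sq_totalDeg_lt G hGsize huv
  refine (hmin G' (mem_filter.2 ⟨mem_univ _, fun i => ?_, hsize'⟩)).not_gt hlt
  rw [hcard', hGcard]

end TotalDegree

theorem Finset.filter_isLeft_disjSum {ι α : Type*} (s : Finset ι) (t : Finset α) :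
    (s.disjSum t).filter (fun x => x.isLeft) = s.map .inl := by
  ext (x | x) <;> simp

theorem Finset.filter_isRight_disjSum {ι α : Type*} (s : Finset ι) (t : Finset α) :
    (s.disjSum t).filter (fun x => x.isRight) = t.map .inr := by
  ext (x | x) <;> simp

section Cone

variable {ι α : Type*} [Fintype ι] [DecidableEq ι] [DecidableEq α]

def coneHypergraph (G : ι → Finset (Finset α)) : Finset (Finset (ι ⊕ α)) :=
  (univ.sigma G).image fun p => ({p.1} : Finset ι).disjSum p.2

theorem mem_coneHypergraph {G : ι → Finset (Finset α)} {e : Finset (ι ⊕ α)} :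
    e ∈ coneHypergraph G ↔ ∃ i, ∃ X ∈ G i, ({i} : Finset ι).disjSum X = e := by
  simp [coneHypergraph]

theorem hdeg_coneHypergraph (G : ι → Finset (Finset α)) (x : ι ⊕ α) :
    hdeg (coneHypergraph G) x = ∑ i, #{X ∈ G i | x ∈ ({i} : Finset ι).disjSum X} := by
  have hinj : Set.InjOn (fun p : Σ _ : ι, Finset α => ({p.1} : Finset ι).disjSum p.2)
      (univ.sigma G) := by
    rintro ⟨i, X⟩ - ⟨j, Y⟩ - h
    obtain ⟨hij, rfl⟩ := disjSum_inj.1 h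
    obtain rfl := singleton_inj.1 hij
    rfl
  rw [hdeg, coneHypergraph, filter_image, card_image_of_injOn (hinj.mono (filter_subset _ _)),
    card_filter, sum_sigma]
  simp only [card_filter]

theorem hdeg_coneHypergraph_inl (G : ι → Finset (Finset α)) (i : ι) :
    hdeg (coneHypergraph G) (.inl i) = #(G i) := by
  rw [hdeg_coneHypergraph]
  simp [apply_ite card]

theorem hdeg_coneHypergraph_inr (G : ι → Finset (Finset α)) (a : α) :
    hdeg (coneHypergraph G) (.inr a) = totalDeg G a := by
  rw [hdeg_coneHypergraph]
  simp [totalDeg, hdeg]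

end Cone

theorem sum_hdeg_s7 {α : Type*} [Fintype α] [DecidableEq α] (F : Finset (Finset α)) :
    ∑ a, hdeg F a = ∑ X ∈ F, #X := by
  simp only [hdeg, card_filter]
  rw [sum_comm]
  simp

theorem sum_totalDeg {ι α : Type*} [Fintype ι] [Fintype α] [DecidableEq α]
    (G : ι → Finset (Finset α)) : ∑ a, totalDeg G a = ∑ i, ∑ X ∈ G i, #X := by
  simp only [totalDeg]
  rw [sum_comm]
  simp only [sum_hdeg_s7]

theorem add_sub_one_div_eq_of_eq_mul_add {N m q b : ℕ} (h : N = m * q + b) (hb : b < m) :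
    (N + m - 1) / m = if b = 0 then q else q + 1 := by
  have hq₀ : q * m = m * q := mul_comm q m
  have hq₁ : (q + 1) * m = m * q + m := by ring
  have hq₂ : (q + 1 + 1) * m = m * q + 2 * m := by ring
  split_ifs <;> exact Nat.div_eq_of_lt_le (by omega) (by omega)

theorem sum_eq_mul_add_card_filter {α : Type*} [Fintype α] {f : α → ℕ} {q : ℕ}
    (hf : ∀ a, f a = q ∨ f a = q + 1) :
    ∑ a, f a = Fintype.card α * q + #{a | f a = q + 1} := by
  calc ∑ a, f a = ∑ a, (q + if f a = q + 1 then 1 else 0) :=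
        sum_congr rfl fun a _ => by rcases hf a with h | h <;> simp [h]
    _ = Fintype.card α * q + #{a | f a = q + 1} := by
        rw [sum_add_distrib, sum_const, card_univ, smul_eq_mul, sum_boole, Nat.cast_id]

theorem exists_partition_of_equitableOn {α : Type*} [Fintype α] {f : α → ℕ} {N m : ℕ}
    (hf : Set.univ.EquitableOn f) (hN : ∑ a, f a = N) (hm : Fintype.card α = m) :
    ∃ A : Finset α, #A = m * ((N + m - 1) / m) - N ∧ (∀ a ∈ A, f a = N / m) ∧
      ∀ a ∉ A, f a = (N + m - 1) / m := by
  classical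
  rcases isEmpty_or_nonempty α with hα | hα
  · subst hm
    exact ⟨∅, by simp [← hN], by simp, fun a => isEmptyElim a⟩
  have hdm := Nat.div_add_mod N m
  have hmod := Nat.mod_lt N (hm ▸ Fintype.card_pos)
  set q := N / m
  have hval (a : α) : f a = q ∨ f a = q + 1 := by
    rw [← coe_univ, Finset.equitableOn_iff, card_univ, hm, hN] at hf
    exact hf a (mem_univ a)
  have hNB := sum_eq_mul_add_card_filter hval
  rw [hN, hm] at hNB
  rw [add_sub_one_div_eq_of_eq_mul_add hNB (by omega)]
  split_ifs with hB0
  · have hconst (a : α) : f a = q := (hval a).resolve_right fun h =>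
      notMem_empty a (card_eq_zero.1 hB0 ▸ mem_filter.2 ⟨mem_univ a, h⟩)
    exact ⟨∅, by simp [hNB, hB0], by simp, fun a _ => hconst a⟩
  · refine ⟨univ.filter fun a => f a = q, ?_, fun a ha => (mem_filter.1 ha).2,
      fun a ha => (hval a).resolve_left fun h => ha (mem_filter.2 ⟨mem_univ a, h⟩)⟩
    have hcompl : univ.filter (fun a => ¬ f a = q + 1) = univ.filter fun a => f a = q :=
      filter_congr fun a _ => by rcases hval a with h | h <;> simp [h]
    have hsplit : #{a | f a = q + 1} + #(univ.filter fun a => f a = q) = m := by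
      rw [← hcompl, card_filter_add_card_filter_not, card_univ, hm]
    rw [mul_add_one]
    omega

theorem almost_regular_gadget_general (t s d m : ℕ) (ht : 3 ≤ t)
    (hC : d ≤ m.choose (t - 1)) :
    ∃ H : Finset (Finset (Sum (Fin s) (Fin m))),
      (∀ e ∈ H, e.card = t) ∧
      (∀ e ∈ H, (e.filter (fun x => x.isLeft)).card = 1 ∧
        (e.filter (fun x => x.isRight)).card = t - 1) ∧
      (∀ v : Fin s, hdeg H (Sum.inl v) = d) ∧
      (∃ A : Finset (Fin m),
        A.card = m * ((s * d * (t - 1) + m - 1) / m) - s * d * (t - 1) ∧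
        (∀ u ∈ A, hdeg H (Sum.inr u) = s * d * (t - 1) / m) ∧
        (∀ u ∉ A, hdeg H (Sum.inr u) = (s * d * (t - 1) + m - 1) / m)) := by
  obtain ⟨F, hFsub, hFcard⟩ := exists_subset_card_eq (n := d)
    (s := powersetCard (t - 1) (univ : Finset (Fin m)))
    (by rwa [card_powersetCard, card_univ, Fintype.card_fin])
  obtain ⟨G, hGcard, hGsize, hGbal⟩ := exists_equitableOn_totalDeg (fun _ : Fin s => F)
    fun _ X hX => (mem_powersetCard.1 (hFsub hX)).2
  have hsum : ∑ a, totalDeg G a = s * d * (t - 1) := by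
    simp [sum_totalDeg, sum_const_nat (hGsize _), hGcard, hFcard, mul_assoc]
  obtain ⟨A, hA, hAlow, hAhigh⟩ := exists_partition_of_equitableOn hGbal hsum (Fintype.card_fin m)
  refine ⟨coneHypergraph G, fun e he => ?_, fun e he => ?_, fun i => ?_,
    A, hA, fun a ha => ?_, fun a ha => ?_⟩
  · obtain ⟨i, X, hX, rfl⟩ := mem_coneHypergraph.1 he
    rw [card_disjSum, card_singleton, hGsize i X hX]
    omega
  · obtain ⟨i, X, hX, rfl⟩ := mem_coneHypergraph.1 he
    rw [filter_isLeft_disjSum, filter_isRight_disjSum, card_map, card_map, card_singleton,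
      hGsize i X hX]
    exact ⟨rfl, rfl⟩
  · rw [hdeg_coneHypergraph_inl, hGcard, hFcard]
  · rw [hdeg_coneHypergraph_inr, hAlow a ha]
  · rw [hdeg_coneHypergraph_inr, hAhigh a ha]

/-- The almost-regular gadget lemma: with `k = m⌈sd(t-1)/m⌉ - sd(t-1)`, the degree
sequence consisting of `s` copies of `d`, `k` copies of `⌊sd(t-1)/m⌋` and `m - k`
copies of `⌈sd(t-1)/m⌉` has a simple `t`-uniform realization in which each edge
contains exactly one vertex of the first group and `t-1` vertices of the second. -/
theorem almost_regular_gadget (t s d m : ℕ) (ht : 3 ≤ t)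
    (hs : 0 < s) (hd : 0 < d) (hm : 0 < m)
    (hC : d ≤ m.choose (t - 1)) :
    ∃ H : Finset (Finset (Sum (Fin s) (Fin m))),
      (∀ e ∈ H, e.card = t) ∧
      (∀ e ∈ H, (e.filter (fun x => x.isLeft)).card = 1 ∧
        (e.filter (fun x => x.isRight)).card = t - 1) ∧
      (∀ v : Fin s, hdeg H (Sum.inl v) = d) ∧
      (∃ A : Finset (Fin m),
        A.card = m * ((s * d * (t - 1) + m - 1) / m) - s * d * (t - 1) ∧
        (∀ u ∈ A, hdeg H (Sum.inr u) = s * d * (t - 1) / m) ∧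
        (∀ u ∉ A, hdeg H (Sum.inr u) = (s * d * (t - 1) + m - 1) / m)) :=
  almost_regular_gadget_general t s d m ht hC
end

section
/- Let D be a sequence of n nonnegative integers with minimum δ, maximum Δ, and sum Σ. If the least balanced degree sequence LBDS(n, δ, Δ, Σ) has a simple t-uniform hypergraph realization, then D also has a simple t-uniform hypergraph realization. -/
def Realizable {n : ℕ} (t : ℕ) (d : Fin n → ℕ) : Prop :=
  ∃ H : Finset (Finset (Fin n)),
    (∀ e ∈ H, e.card = t) ∧ (∀ v, hdeg H v = d v)

lemma swap_step {n t : ℕ} {d : Fin n → ℕ} {u v : Fin n} (huv : d v < d u)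
    (h : Realizable t d) :
    Realizable t (Function.update (Function.update d u (d u - 1)) v (d v + 1)) := by
  obtain ⟨H, huni, hdegH⟩ := h
  have hne : u ≠ v := fun h => by rw [h] at huv; exact lt_irrefl _ huv
  classical
  set S := H.filter (fun e => u ∈ e ∧ v ∉ e) with hS
  set T := H.filter (fun e => v ∈ e ∧ u ∉ e) with hT
  -- |T| < |S|
  have hcardS : (H.filter (fun e => u ∈ e ∧ v ∈ e)).card + S.card = d u := by
    rw [← hdegH u]
    unfold hdeg
    rw [hS]
    rw [show (H.filter (fun e => u ∈ e ∧ v ∈ e)) = (H.filter (fun e => u ∈ e)).filter (fun e => v ∈ e) by rw [Finset.filter_filter],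
        show (H.filter (fun e => u ∈ e ∧ v ∉ e)) = (H.filter (fun e => u ∈ e)).filter (fun e => ¬ (v ∈ e)) by rw [Finset.filter_filter]]
    exact Finset.card_filter_add_card_filter_not _
  have hcardT : (H.filter (fun e => u ∈ e ∧ v ∈ e)).card + T.card = d v := by
    rw [← hdegH v]
    unfold hdeg
    rw [hT]
    rw [show (H.filter (fun e => u ∈ e ∧ v ∈ e)) = (H.filter (fun e => v ∈ e)).filter (fun e => u ∈ e) by rw [Finset.filter_filter]; congr 1; ext e; tauto,
        show (H.filter (fun e => v ∈ e ∧ u ∉ e)) = (H.filter (fun e => v ∈ e)).filter (fun e => ¬ (u ∈ e)) by rw [Finset.filter_filter]]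
    exact Finset.card_filter_add_card_filter_not _
  have hTS : T.card < S.card := by omega
  -- find a swappable edge
  have hex : ∃ e ∈ S, insert v (e.erase u) ∉ H := by
    by_contra hcon
    push_neg at hcon
    have hmaps : ∀ e ∈ S, insert v (e.erase u) ∈ T := by
      intro e he
      have heH := Finset.mem_filter.mp he
      refine Finset.mem_filter.mpr ⟨hcon e he, ?_, ?_⟩
      · exact Finset.mem_insert_self _ _
      · intro hu
        rcases Finset.mem_insert.mp hu with h1 | h2
        · exact hne h1
        · exact (Finset.notMem_erase u e) h2
    have hinj : Set.InjOn (fun e : Finset (Fin n) => insert v (e.erase u)) ↑S := by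
      intro e1 h1 e2 h2 heq
      have h1' := Finset.mem_filter.mp h1
      have h2' := Finset.mem_filter.mp h2
      simp only at heq
      have e1eq : e1.erase u = e2.erase u := by
        have := congrArg (fun s => Finset.erase s v) heq
        rwa [Finset.erase_insert (fun hh => h1'.2.2 (Finset.mem_of_mem_erase hh)),
             Finset.erase_insert (fun hh => h2'.2.2 (Finset.mem_of_mem_erase hh))] at this
      have := congrArg (fun s => insert u s) e1eq
      simpa [Finset.insert_erase h1'.2.1, Finset.insert_erase h2'.2.1] using this
    have := Finset.card_le_card_of_injOn _ hmaps hinj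
    omega
  obtain ⟨e0, he0S, hf0⟩ := hex
  set f0 := insert v (e0.erase u) with hf0def
  have he0 := Finset.mem_filter.mp he0S
  have hue0 : u ∈ e0 := he0.2.1
  have hve0 : v ∉ e0 := he0.2.2
  have he0H : e0 ∈ H := he0.1
  have hvnoterase : v ∉ e0.erase u := fun h => hve0 (Finset.mem_of_mem_erase h)
  have hcard_f0 : f0.card = t := by
    rw [hf0def, Finset.card_insert_of_notMem hvnoterase,
        Finset.card_erase_of_mem hue0, huni e0 he0H]
    have ht : 1 ≤ t := by
      rw [← huni e0 he0H]; exact Finset.card_pos.mpr ⟨u, hue0⟩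
    omega
  have huf0 : u ∉ f0 := by
    rw [hf0def]
    intro h
    rcases Finset.mem_insert.mp h with h1 | h2
    · exact hne h1
    · exact Finset.notMem_erase u e0 h2
  have hvf0 : v ∈ f0 := Finset.mem_insert_self _ _
  refine ⟨insert f0 (H.erase e0), ?_, ?_⟩
  · intro e he
    rcases Finset.mem_insert.mp he with rfl | h2
    · exact hcard_f0
    · exact huni e (Finset.mem_of_mem_erase h2)
  · intro w
    have hmemf0 : w ≠ u → w ≠ v → (w ∈ f0 ↔ w ∈ e0) := by
      intro hwu hwv
      rw [hf0def]
      simp [Finset.mem_insert, Finset.mem_erase, hwu, hwv]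
    have hkey : hdeg (insert f0 (H.erase e0)) w
        = (if w ∈ f0 then 1 else 0) + ((H.filter (fun e => w ∈ e)).card - (if w ∈ e0 then 1 else 0)) := by
      unfold hdeg
      rw [Finset.filter_insert]
      have herase : (H.erase e0).filter (fun e => w ∈ e) = (H.filter (fun e => w ∈ e)).erase e0 :=
        Finset.filter_erase _ _ _
      by_cases hw : w ∈ f0
      · rw [if_pos hw, if_pos hw]
        have hf0not : f0 ∉ (H.erase e0).filter (fun e => w ∈ e) := by
          intro h
          exact hf0 (Finset.mem_of_mem_erase (Finset.mem_filter.mp h).1)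
        rw [Finset.card_insert_of_notMem hf0not, herase]
        by_cases hwe0 : w ∈ e0
        · rw [if_pos hwe0, Finset.card_erase_of_mem (Finset.mem_filter.mpr ⟨he0H, hwe0⟩)]
          have : 1 ≤ (H.filter (fun e => w ∈ e)).card :=
            Finset.card_pos.mpr ⟨e0, Finset.mem_filter.mpr ⟨he0H, hwe0⟩⟩
          omega
        · rw [if_neg hwe0, Finset.erase_eq_of_notMem (by simp [hwe0]), Nat.sub_zero, Nat.add_comm]
      · rw [if_neg hw, if_neg hw, herase]
        by_cases hwe0 : w ∈ e0
        · rw [if_pos hwe0, Finset.card_erase_of_mem (Finset.mem_filter.mpr ⟨he0H, hwe0⟩)]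
          omega
        · rw [if_neg hwe0, Finset.erase_eq_of_notMem (by simp [hwe0])]
          omega
    rw [hkey]
    have hdw : (H.filter (fun e => w ∈ e)).card = d w := hdegH w
    rw [hdw]
    by_cases hwu : w = u
    · subst hwu
      rw [if_neg huf0, if_pos hue0, Function.update_of_ne hne, Function.update_self]
      omega
    · by_cases hwv : w = v
      · subst hwv
        rw [if_pos hvf0, if_neg hve0, Function.update_self]
        omega
      · have hiff := hmemf0 hwu hwv
        rw [Function.update_of_ne hwv, Function.update_of_ne hwu]
        by_cases hw0 : w ∈ e0
        · rw [if_pos (hiff.mpr hw0), if_pos hw0]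
          have : 1 ≤ d w := by
            rw [← hdegH w]
            exact Finset.card_pos.mpr ⟨e0, Finset.mem_filter.mpr ⟨he0H, hw0⟩⟩
          omega
        · rw [if_neg (fun h => hw0 (hiff.mp h)), if_neg hw0]
          omega

lemma realizable_perm {n t : ℕ} {d : Fin n → ℕ} (σ : Equiv.Perm (Fin n))
    (h : Realizable t d) : Realizable t (d ∘ ⇑σ) := by
  obtain ⟨H, huni, hdegH⟩ := h
  refine ⟨H.image (fun e => e.image ⇑σ⁻¹), ?_, ?_⟩
  · intro e he
    simp only [Finset.mem_image] at he
    obtain ⟨e', he', rfl⟩ := he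
    rw [Finset.card_image_of_injective _ (Equiv.injective _)]
    exact huni e' he'
  · intro v
    have hinj : Function.Injective (fun e : Finset (Fin n) => e.image ⇑σ⁻¹) :=
      fun a b hab => Finset.image_injective (Equiv.injective _) hab
    have key : (H.image (fun e => e.image ⇑σ⁻¹)).filter (fun e => v ∈ e)
        = (H.filter (fun e => σ v ∈ e)).image (fun e => e.image ⇑σ⁻¹) := by
      ext e
      simp only [Finset.mem_filter, Finset.mem_image]
      constructor
      · rintro ⟨⟨e', he', rfl⟩, hv⟩
        refine ⟨e', ⟨he', ?_⟩, rfl⟩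
        simp only [Finset.mem_image] at hv
        obtain ⟨w, hw, hwv⟩ := hv
        have : w = σ v := by
          have := congrArg σ hwv
          simpa using this
        rwa [this] at hw
      · rintro ⟨e', ⟨he', hv⟩, rfl⟩
        refine ⟨⟨e', he', rfl⟩, ?_⟩
        exact Finset.mem_image.mpr ⟨σ v, hv, by simp⟩
    show ((H.image _).filter _).card = _
    rw [key, Finset.card_image_of_injective _ hinj]
    exact hdegH (σ v)

def pref {n : ℕ} (c : Fin n → ℕ) (m : ℕ) : ℕ :=
  ∑ i ∈ Finset.univ.filter (fun i : Fin n => (i : ℕ) < m), c i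

lemma sum_update2 {n : ℕ} (s : Finset (Fin n)) (c : Fin n → ℕ) (i' j' : Fin n)
    (hne : i' ≠ j') (h1 : 1 ≤ c i') :
    (∑ x ∈ s, (Function.update (Function.update c i' (c i' - 1)) j' (c j' + 1)) x)
      + (if i' ∈ s then 1 else 0)
    = (∑ x ∈ s, c x) + (if j' ∈ s then 1 else 0) := by
  set c' := Function.update (Function.update c i' (c i' - 1)) j' (c j' + 1) with hc'
  have key : ∀ x, ((c' x : ℤ))
      = (c x : ℤ) + (if x = j' then 1 else 0) - (if x = i' then 1 else 0) := by
    intro x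
    by_cases hxj : x = j'
    · subst hxj
      rw [hc']
      simp [Function.update_self, Function.update_of_ne (Ne.symm hne), hne.symm]
    · rw [hc', Function.update_of_ne hxj]
      by_cases hxi : x = i'
      · subst hxi
        rw [Function.update_self, if_neg hxj, if_pos rfl, Nat.cast_sub h1]
        ring
      · rw [Function.update_of_ne hxi, if_neg hxj, if_neg hxi]
        ring
  have hz : ((∑ x ∈ s, c' x : ℕ) : ℤ) + (if i' ∈ s then 1 else 0)
      = ((∑ x ∈ s, c x : ℕ) : ℤ) + (if j' ∈ s then 1 else 0) := by
    push_cast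
    simp only [key]
    rw [Finset.sum_sub_distrib, Finset.sum_add_distrib,
        Finset.sum_ite_eq' s j' (fun _ => (1:ℤ)), Finset.sum_ite_eq' s i' (fun _ => (1:ℤ))]
    by_cases hi : i' ∈ s <;> by_cases hj : j' ∈ s <;> simp [hi, hj]
  have := hz
  by_cases hi : i' ∈ s <;> by_cases hj : j' ∈ s <;>
    simp only [hi, hj, if_true, if_false] at this ⊢ <;> exact_mod_cast this

lemma exists_max_pred {n : ℕ} (p : Fin n → Prop) [DecidablePred p] {k : Fin n} (hk : p k) :
    ∃ j : Fin n, p j ∧ k ≤ j ∧ ∀ x, p x → x ≤ j := by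
  have hne : (Finset.univ.filter p).Nonempty := ⟨k, Finset.mem_filter.mpr ⟨Finset.mem_univ _, hk⟩⟩
  refine ⟨(Finset.univ.filter p).max' hne, ?_, ?_, ?_⟩
  · exact (Finset.mem_filter.mp ((Finset.univ.filter p).max'_mem hne)).2
  · exact Finset.le_max' _ k (Finset.mem_filter.mpr ⟨Finset.mem_univ _, hk⟩)
  · exact fun x hx => Finset.le_max' _ x (Finset.mem_filter.mpr ⟨Finset.mem_univ _, hx⟩)

lemma exists_min_pred {n : ℕ} (p : Fin n → Prop) [DecidablePred p] {k : Fin n} (hk : p k) :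
    ∃ j : Fin n, p j ∧ j ≤ k ∧ ∀ x, p x → j ≤ x := by
  have hne : (Finset.univ.filter p).Nonempty := ⟨k, Finset.mem_filter.mpr ⟨Finset.mem_univ _, hk⟩⟩
  refine ⟨(Finset.univ.filter p).min' hne, ?_, ?_, ?_⟩
  · exact (Finset.mem_filter.mp ((Finset.univ.filter p).min'_mem hne)).2
  · exact Finset.min'_le _ k (Finset.mem_filter.mpr ⟨Finset.mem_univ _, hk⟩)
  · exact fun x hx => Finset.min'_le _ x (Finset.mem_filter.mpr ⟨Finset.mem_univ _, hx⟩)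

lemma chain {n t : ℕ} (d : Fin n → ℕ) (hd : Monotone d) :
    ∀ N : ℕ, ∀ c : Fin n → ℕ, Monotone c →
      (∀ m : ℕ, pref c m ≤ pref d m) →
      (∑ i, c i = ∑ i, d i) →
      (∑ i, (c i - d i)) ≤ N →
      Realizable t c → Realizable t d := by
  intro N
  induction N with
  | zero =>
    intro c hc hpre htot hpot hreal
    have hcd : c = d := by
      have hle : ∀ i, c i ≤ d i := by
        intro i
        have : c i - d i = 0 := by
          have := Finset.sum_eq_zero_iff.mp (Nat.le_zero.mp hpot) i (Finset.mem_univ i)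
          exact this
        omega
      funext i
      exact (Finset.sum_eq_sum_iff_of_le (fun i _ => hle i)).mp htot i (Finset.mem_univ i)
    rwa [hcd] at hreal
  | succ N ih =>
    intro c hc hpre htot hpot hreal
    by_cases hcd : c = d
    · rwa [hcd] at hreal
    -- k0 : first index where c ≠ d
    have hne1 : (Finset.univ.filter (fun i : Fin n => c i ≠ d i)).Nonempty := by
      rw [Finset.filter_nonempty_iff]
      by_contra h
      push_neg at h
      exact hcd (funext fun i => h i (Finset.mem_univ i))
    obtain ⟨i0, hi0⟩ := hne1
    rw [Finset.mem_filter] at hi0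
    obtain ⟨k0, hk0ne, -, hk0min⟩ := exists_min_pred (fun i : Fin n => c i ≠ d i) hi0.2
    have hbelow : ∀ i, i < k0 → c i = d i := by
      intro i hi
      by_contra h
      exact absurd (hk0min i h) (not_le.mpr hi)
    -- l0 : first index where d < c
    have hne2 : (Finset.univ.filter (fun i : Fin n => d i < c i)).Nonempty := by
      rw [Finset.filter_nonempty_iff]
      by_contra h
      push_neg at h
      have hle : ∀ i, c i ≤ d i := fun i => h i (Finset.mem_univ i)
      exact hcd (funext fun i =>
        (Finset.sum_eq_sum_iff_of_le (fun i _ => hle i)).mp htot i (Finset.mem_univ i))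
    obtain ⟨i0', hi0'⟩ := hne2
    rw [Finset.mem_filter] at hi0'
    obtain ⟨l0, hl0lt, -, hl0min⟩ := exists_min_pred (fun i : Fin n => d i < c i) hi0'.2
    have hbelowl : ∀ i, i < l0 → c i ≤ d i := by
      intro i hi
      by_contra h
      exact absurd (hl0min i (not_le.mp h)) (not_le.mpr hi)
    -- c k0 < d k0
    have hk0lt : c k0 < d k0 := by
      have hp := hpre ((k0 : ℕ) + 1)
      have hmem : k0 ∈ Finset.univ.filter (fun i : Fin n => (i : ℕ) < (k0 : ℕ) + 1) :=
        Finset.mem_filter.mpr ⟨Finset.mem_univ _, by omega⟩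
      rw [pref, pref, ← Finset.add_sum_erase _ c hmem, ← Finset.add_sum_erase _ d hmem] at hp
      have heq : ∑ x ∈ (Finset.univ.filter (fun i : Fin n => (i : ℕ) < (k0 : ℕ) + 1)).erase k0, c x
          = ∑ x ∈ (Finset.univ.filter (fun i : Fin n => (i : ℕ) < (k0 : ℕ) + 1)).erase k0, d x := by
        apply Finset.sum_congr rfl
        intro x hx
        have hx' := Finset.mem_erase.mp hx
        have hxlt : (x : ℕ) < (k0 : ℕ) + 1 := (Finset.mem_filter.mp hx'.2).2
        apply hbelow
        have : (x : ℕ) ≠ (k0 : ℕ) := fun h => hx'.1 (Fin.ext h)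
        exact Fin.lt_def.mpr (by omega)
      rw [heq] at hp
      have : c k0 ≤ d k0 := by omega
      omega
    -- k0 < l0
    have hk0l0 : k0 < l0 := by
      rcases lt_trichotomy k0 l0 with h | h | h
      · exact h
      · exfalso; rw [h] at hk0lt; omega
      · exfalso; exact absurd (hbelow l0 h) (by omega)
    -- value gap
    have hgap : c k0 + 2 ≤ c l0 := by
      have := hd (le_of_lt hk0l0)
      omega
    -- j' : last index with value c k0 ; i' : first index with value c l0
    obtain ⟨j', hj'val, hj'ge, hj'maxp⟩ :=
      exists_max_pred (fun j : Fin n => c j = c k0) (rfl : c k0 = c k0)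
    have hj'max : ∀ x, j' < x → c k0 < c x := by
      intro x hx
      have hge : c j' ≤ c x := hc (le_of_lt hx)
      rcases eq_or_lt_of_le hge with h | h
      · exact absurd (hj'maxp x (by rw [← h, hj'val])) (not_le.mpr hx)
      · omega
    obtain ⟨i', hi'val, hi'le, hi'minp⟩ :=
      exists_min_pred (fun i : Fin n => c i = c l0) (rfl : c l0 = c l0)
    have hi'min : ∀ x, x < i' → c x < c l0 := by
      intro x hx
      have hle : c x ≤ c i' := hc (le_of_lt hx)
      rcases eq_or_lt_of_le hle with h | h
      · exact absurd (hi'minp x (by rw [h, hi'val])) (not_le.mpr hx)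
      · rw [← hi'val]; exact h
    have hji : j' < i' := by
      by_contra h
      have := hc (not_lt.mp h)
      rw [hi'val, hj'val] at this
      omega
    have hij : i' ≠ j' := fun h => absurd h.symm (ne_of_lt hji)
    -- degree bounds at i', j'
    have hcj'lt : c j' < d j' := by
      have := hd hj'ge
      omega
    have hci'gt : d i' < c i' := by
      have := hd hi'le
      omega
    -- apply swap
    set c' := Function.update (Function.update c i' (c i' - 1)) j' (c j' + 1) with hc'def
    have hreal' : Realizable t c' := swap_step (by rw [hj'val, hi'val]; omega) hreal
    have hc'i' : c' i' = c i' - 1 := by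
      rw [hc'def, Function.update_of_ne hij, Function.update_self]
    have hc'j' : c' j' = c j' + 1 := by rw [hc'def, Function.update_self]
    have hc'other : ∀ x, x ≠ i' → x ≠ j' → c' x = c x := by
      intro x h1 h2
      rw [hc'def, Function.update_of_ne h2, Function.update_of_ne h1]
    have h1ci' : 1 ≤ c i' := by omega
    -- monotone c'
    have hc'mono : Monotone c' := by
      intro a b hab
      rcases eq_or_lt_of_le hab with rfl | hab
      · exact le_refl _
      by_cases haj : a = j'
      · rw [haj, hc'j']
        have hjb : j' < b := haj ▸ hab
        by_cases hbi : b = i'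
        · rw [hbi, hc'i', hj'val, hi'val]; omega
        · have hbj : b ≠ j' := (ne_of_lt hjb).symm
          rw [hc'other b hbi hbj]
          have := hj'max b hjb
          rw [hj'val]; omega
      · by_cases hai : a = i'
        · have hib : i' < b := hai ▸ hab
          have hbj : b ≠ j' := (ne_of_lt (lt_trans hji hib)).symm
          have hbi : b ≠ i' := (ne_of_lt hib).symm
          rw [hai, hc'i', hc'other b hbi hbj]
          have := hc (le_of_lt hib)
          omega
        · rw [hc'other a hai haj]
          by_cases hbj : b = j'
          · rw [hbj, hc'j']
            have h2 := hc (le_of_lt hab)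
            rw [hbj] at h2
            omega
          · by_cases hbi : b = i'
            · rw [hbi, hc'i']
              have := hi'min a (hbi ▸ hab)
              rw [hi'val]
              omega
            · rw [hc'other b hbi hbj]
              exact hc (le_of_lt hab)
    -- strict prefix inequality in the middle zone
    have hstrict : ∀ m : ℕ, (k0 : ℕ) < m → m ≤ (l0 : ℕ) → pref c m + 1 ≤ pref d m := by
      intro m h1 h2
      have : pref c m < pref d m := by
        apply Finset.sum_lt_sum
        · intro i hi
          have hilt : (i : ℕ) < m := (Finset.mem_filter.mp hi).2
          apply hbelowl
          exact Fin.lt_def.mpr (by omega)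
        · exact ⟨k0, Finset.mem_filter.mpr ⟨Finset.mem_univ _, h1⟩, hk0lt⟩
      omega
    -- prefix condition for c'
    have hpre' : ∀ m : ℕ, pref c' m ≤ pref d m := by
      intro m
      have hsum := sum_update2 (Finset.univ.filter (fun i : Fin n => (i : ℕ) < m)) c i' j' hij h1ci'
      rw [← hc'def] at hsum
      by_cases hjm : j' ∈ Finset.univ.filter (fun i : Fin n => (i : ℕ) < m)
      · by_cases him : i' ∈ Finset.univ.filter (fun i : Fin n => (i : ℕ) < m)
        · rw [if_pos hjm, if_pos him] at hsum
          have : pref c' m = pref c m := by rw [pref, pref]; omega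
          rw [this]; exact hpre m
        · rw [if_pos hjm, if_neg him] at hsum
          have hjlt : (j' : ℕ) < m := (Finset.mem_filter.mp hjm).2
          have hige : m ≤ (i' : ℕ) := by
            by_contra h
            exact him (Finset.mem_filter.mpr ⟨Finset.mem_univ _, not_le.mp h⟩)
          have h1 : (k0 : ℕ) < m := by
            have : (k0 : ℕ) ≤ (j' : ℕ) := hj'ge
            omega
          have h2 : m ≤ (l0 : ℕ) := by
            have : (i' : ℕ) ≤ (l0 : ℕ) := hi'le
            omega
          have := hstrict m h1 h2
          rw [pref] at *
          omega
      · have him : i' ∉ Finset.univ.filter (fun i : Fin n => (i : ℕ) < m) := by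
          intro h
          apply hjm
          have hilt : (i' : ℕ) < m := (Finset.mem_filter.mp h).2
          have : (j' : ℕ) < (i' : ℕ) := hji
          exact Finset.mem_filter.mpr ⟨Finset.mem_univ _, by omega⟩
        rw [if_neg hjm, if_neg him] at hsum
        have : pref c' m = pref c m := by rw [pref, pref]; omega
        rw [this]; exact hpre m
    -- total preserved
    have htot' : ∑ i, c' i = ∑ i, d i := by
      have hsum := sum_update2 Finset.univ c i' j' hij h1ci'
      rw [← hc'def, if_pos (Finset.mem_univ _), if_pos (Finset.mem_univ _)] at hsum
      omega
    -- potential decreases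
    have hpot' : (∑ i, (c' i - d i)) ≤ N := by
      have e1 : ∑ i, (c' i - d i)
          = (c' i' - d i') + ∑ x ∈ Finset.univ.erase i', (c' x - d x) :=
        (Finset.add_sum_erase _ _ (Finset.mem_univ i')).symm
      have e2 : ∑ i, (c i - d i)
          = (c i' - d i') + ∑ x ∈ Finset.univ.erase i', (c x - d x) :=
        (Finset.add_sum_erase _ _ (Finset.mem_univ i')).symm
      have e3 : ∑ x ∈ Finset.univ.erase i', (c' x - d x)
          ≤ ∑ x ∈ Finset.univ.erase i', (c x - d x) := by
        apply Finset.sum_le_sum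
        intro x hx
        have hxi : x ≠ i' := (Finset.mem_erase.mp hx).1
        by_cases hxj : x = j'
        · subst hxj; rw [hc'j']; omega
        · rw [hc'other x hxi hxj]
      have e4 : c' i' - d i' = (c i' - d i') - 1 := by rw [hc'i']; omega
      have e5 : 1 ≤ c i' - d i' := by omega
      rw [e1, e4]
      rw [e2] at hpot
      omega
    exact ih c' hc'mono hpre' htot' hpot' hreal'

/-- If a least balanced degree sequence `LBDS(n, δ, Δ, Σ)` has a simple `t`-uniform
hypergraph realization, then so does any sequence of length `n` with minimum `δ`,
maximum `Δ`, and sum `Σ`. -/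
theorem lbds_realizable_implies_realizable (n t δ Δ Sig : ℕ)
    (D : Fin n → ℕ)
    (hmin : ∀ i, δ ≤ D i) (hmax : ∀ i, D i ≤ Δ)
    (hminatt : ∃ i, D i = δ) (hmaxatt : ∃ i, D i = Δ)
    (hsum : ∑ i, D i = Sig)
    (L : Fin n → ℕ)
    (hL1 : ∀ i, δ ≤ L i ∧ L i ≤ Δ)
    (hL2 : (Finset.univ.filter (fun i => δ < L i ∧ L i < Δ)).card ≤ 1)
    (hL3 : ∑ i, L i = Sig)
    (hreal : ∃ H : Finset (Finset (Fin n)),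
      (∀ e ∈ H, e.card = t) ∧ (∀ v, hdeg H v = L v)) :
    ∃ H : Finset (Finset (Fin n)),
      (∀ e ∈ H, e.card = t) ∧ (∀ v, hdeg H v = D v) := by
  classical
  set σL := Tuple.sort L with hσL
  set σD := Tuple.sort D with hσD
  set c := L ∘ ⇑σL with hcdef
  set d := D ∘ ⇑σD with hddef
  have hcmono : Monotone c := Tuple.monotone_sort L
  have hdmono : Monotone d := Tuple.monotone_sort D
  have hrealL : Realizable t L := hreal
  have hrealc : Realizable t c := realizable_perm σL hrealL
  -- totals
  have htotc : ∑ i, c i = Sig := by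
    rw [hcdef]
    rw [show ∑ i, (L ∘ ⇑σL) i = ∑ i, L (σL i) from rfl]
    rw [Equiv.sum_comp σL L]
    exact hL3
  have htotd : ∑ i, d i = Sig := by
    rw [hddef]
    rw [show ∑ i, (D ∘ ⇑σD) i = ∑ i, D (σD i) from rfl]
    rw [Equiv.sum_comp σD D]
    exact hsum
  -- middle uniqueness for c
  have hmid : ∀ i j : Fin n, δ < c i → c i < Δ → δ < c j → c j < Δ → i = j := by
    intro i j h1 h2 h3 h4
    have hcard := Finset.card_le_one.mp hL2
    have h5 : σL i = σL j := by
      apply hcard (σL i) ?_ (σL j) ?_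
      · exact Finset.mem_filter.mpr ⟨Finset.mem_univ _, h1, h2⟩
      · exact Finset.mem_filter.mpr ⟨Finset.mem_univ _, h3, h4⟩
    exact σL.injective h5
  -- prefix majorization
  have hpre : ∀ m : ℕ, pref c m ≤ pref d m := by
    intro m
    by_contra hcon
    push_neg at hcon
    set F := Finset.univ.filter (fun i : Fin n => (i : ℕ) < m) with hF
    -- some low entry of c exceeds δ
    have h1 : ∃ i ∈ F, δ < c i := by
      by_contra h
      push_neg at h
      have hceq : ∀ i ∈ F, c i = δ := by
        intro i hi
        have := (hL1 (σL i)).1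
        have h2 : δ ≤ c i := this
        exact le_antisymm (h i hi) h2
      have : pref c m ≤ pref d m := by
        rw [pref, pref, ← hF]
        apply Finset.sum_le_sum
        intro i hi
        rw [hceq i hi]
        exact hmin (σD i)
      omega
    -- some high entry of c is below Δ
    have hsplitc := Finset.sum_filter_add_sum_filter_not Finset.univ
      (fun i : Fin n => (i : ℕ) < m) c
    have hsplitd := Finset.sum_filter_add_sum_filter_not Finset.univ
      (fun i : Fin n => (i : ℕ) < m) d
    have hsuf : ∑ i ∈ Finset.univ.filter (fun i : Fin n => ¬ ((i : ℕ) < m)), c i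
        < ∑ i ∈ Finset.univ.filter (fun i : Fin n => ¬ ((i : ℕ) < m)), d i := by
      have hc' : pref c m = ∑ i ∈ Finset.univ.filter (fun i : Fin n => (i : ℕ) < m), c i := rfl
      have hd' : pref d m = ∑ i ∈ Finset.univ.filter (fun i : Fin n => (i : ℕ) < m), d i := rfl
      have e1 : pref c m + ∑ i ∈ Finset.univ.filter (fun i : Fin n => ¬ ((i : ℕ) < m)), c i = Sig := by
        rw [hc']; rw [hsplitc]; exact htotc
      have e2 : pref d m + ∑ i ∈ Finset.univ.filter (fun i : Fin n => ¬ ((i : ℕ) < m)), d i = Sig := by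
        rw [hd']; rw [hsplitd]; exact htotd
      omega
    have h2 : ∃ i ∈ Finset.univ.filter (fun i : Fin n => ¬ ((i : ℕ) < m)), c i < Δ := by
      by_contra h
      push_neg at h
      have hceq : ∀ i ∈ Finset.univ.filter (fun i : Fin n => ¬ ((i : ℕ) < m)), c i = Δ := by
        intro i hi
        have him := (Finset.mem_filter.mp hi).2
        exact le_antisymm ((hL1 (σL i)).2)
          (h i (Finset.mem_filter.mpr ⟨Finset.mem_univ _, by omega⟩))
      have : ∑ i ∈ Finset.univ.filter (fun i : Fin n => ¬ ((i : ℕ) < m)), d i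
          ≤ ∑ i ∈ Finset.univ.filter (fun i : Fin n => ¬ ((i : ℕ) < m)), c i := by
        apply Finset.sum_le_sum
        intro i hi
        rw [hceq i hi]
        exact hmax (σD i)
      omega
    obtain ⟨i1, hi1F, hi1⟩ := h1
    obtain ⟨i2, hi2F, hi2⟩ := h2
    have hi1m : (i1 : ℕ) < m := (Finset.mem_filter.mp hi1F).2
    have hi2m : ¬ ((i2 : ℕ) < m) := (Finset.mem_filter.mp hi2F).2
    have h12 : i1 ≤ i2 := by
      rw [Fin.le_def]; omega
    have hle : c i1 ≤ c i2 := hcmono h12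
    have : i1 = i2 := hmid i1 i2 hi1 (by omega) (by omega) hi2
    rw [this] at hi1m
    omega
  -- run the chain
  have hpot : (∑ i, (c i - d i)) ≤ ∑ i, (c i - d i) := le_refl _
  have hreald : Realizable t d :=
    chain d hdmono (∑ i, (c i - d i)) c hcmono hpre (by rw [htotc, htotd]) hpot hrealc
  have : Realizable t (d ∘ ⇑σD⁻¹) := realizable_perm σD⁻¹ hreald
  have hDeq : d ∘ ⇑σD⁻¹ = D := by
    funext x
    rw [hddef]
    simp
  rwa [hDeq] at this
end

section
/- Let D be a length-n integer sequence with minimum δ, maximum Δ, and sum Σ that is not the least balanced sequence LBDS(n, δ, Δ, Σ). Then D has at least two entries strictly between δ and Δ, and decreasing a smallest such entry by 1 and increasing a largest such entry by 1 yields a new sequence with the same minimum, maximum, and sum; iterating this process reaches LBDS(n, δ, Δ, Σ) in finitely many steps. -/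
/-- `D` is a least balanced degree sequence with parameters `(n, δ, Δ, Sig)`. -/
def IsLBDS (n δ Δ Sig : ℕ) (D : Fin n → ℕ) : Prop :=
  (∑ i, D i = Sig) ∧ (∀ i, δ ≤ D i ∧ D i ≤ Δ) ∧
  (Finset.univ.filter (fun i => δ < D i ∧ D i < Δ)).card ≤ 1

/-- One balancing step: decrease a smallest entry strictly between `δ` and `Δ` by one
and increase a largest such entry by one. -/
def BalStep (n δ Δ : ℕ) (D D' : Fin n → ℕ) : Prop :=
  ∃ i j : Fin n, i ≠ j ∧ (δ < D i ∧ D i < Δ) ∧ (δ < D j ∧ D j < Δ) ∧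
    (∀ l : Fin n, (δ < D l ∧ D l < Δ) → D i ≤ D l ∧ D l ≤ D j) ∧
    D' = Function.update (Function.update D i (D i - 1)) j (D j + 1)

lemma step_lemma {n δ Δ : ℕ} (D : Fin n → ℕ)
    (hmin : ∀ i, δ ≤ D i) (hmax : ∀ i, D i ≤ Δ)
    (hcard : 2 ≤ (Finset.univ.filter (fun i => δ < D i ∧ D i < Δ)).card) :
    ∃ D₁, BalStep n δ Δ D D₁ ∧ (∀ i, δ ≤ D₁ i ∧ D₁ i ≤ Δ) ∧
      (∀ i, D i = δ → D₁ i = δ) ∧ (∀ i, D i = Δ → D₁ i = Δ) ∧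
      (∑ i, D₁ i = ∑ i, D i) ∧ (∑ i, (D i)^2 + 1 ≤ ∑ i, (D₁ i)^2) := by
  set S := Finset.univ.filter (fun i => δ < D i ∧ D i < Δ) with hS
  have hSne : S.Nonempty := by rw [← Finset.card_pos]; omega
  obtain ⟨i, hiS, hi_min⟩ := S.exists_min_image D hSne
  have hSe : (S.erase i).Nonempty := by
    rw [← Finset.card_pos, Finset.card_erase_of_mem hiS]; omega
  obtain ⟨j, hjS', hj_max⟩ := (S.erase i).exists_max_image D hSe
  have hji : j ≠ i := Finset.ne_of_mem_erase hjS'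
  have hjS : j ∈ S := Finset.mem_of_mem_erase hjS'
  have hiP : δ < D i ∧ D i < Δ := by
    have := hiS; rw [hS, Finset.mem_filter] at this; exact this.2
  have hjP : δ < D j ∧ D j < Δ := by
    have := hjS; rw [hS, Finset.mem_filter] at this; exact this.2
  have hDij : D i ≤ D j := hi_min j hjS
  have hbound : ∀ l : Fin n, (δ < D l ∧ D l < Δ) → D i ≤ D l ∧ D l ≤ D j := by
    intro l hl
    have hlS : l ∈ S := by rw [hS, Finset.mem_filter]; exact ⟨Finset.mem_univ l, hl⟩
    refine ⟨hi_min l hlS, ?_⟩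
    rcases eq_or_ne l i with rfl | h
    · exact hDij
    · exact hj_max l (Finset.mem_erase.mpr ⟨h, hlS⟩)
  set D₁ := Function.update (Function.update D i (D i - 1)) j (D j + 1) with hD₁
  have hij : i ≠ j := hji.symm
  have hD₁i : D₁ i = D i - 1 := by
    rw [hD₁, Function.update_of_ne hij, Function.update_self]
  have hD₁j : D₁ j = D j + 1 := by rw [hD₁, Function.update_self]
  have hD₁l : ∀ l, l ≠ i → l ≠ j → D₁ l = D l := by
    intro l h1 h2
    rw [hD₁, Function.update_of_ne h2, Function.update_of_ne h1]
  have hi1 : 1 ≤ D i := by omega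
  have hiu : i ∈ Finset.univ.erase j := Finset.mem_erase.mpr ⟨hij, Finset.mem_univ i⟩
  set E := (Finset.univ.erase j).erase i with hE
  have hEeq : ∀ (f : Fin n → ℕ), ∑ l, f l = f j + (f i + ∑ l ∈ E, f l) := by
    intro f
    rw [hE, Finset.add_sum_erase _ f hiu, Finset.add_sum_erase _ f (Finset.mem_univ j)]
  have hEsame : ∑ l ∈ E, D₁ l = ∑ l ∈ E, D l := by
    refine Finset.sum_congr rfl fun l hl => ?_
    rw [hE] at hl
    exact hD₁l l (Finset.ne_of_mem_erase hl)
      (Finset.ne_of_mem_erase (Finset.mem_of_mem_erase hl))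
  have hEsame2 : ∑ l ∈ E, (D₁ l)^2 = ∑ l ∈ E, (D l)^2 := by
    refine Finset.sum_congr rfl fun l hl => ?_
    rw [hE] at hl
    rw [hD₁l l (Finset.ne_of_mem_erase hl)
      (Finset.ne_of_mem_erase (Finset.mem_of_mem_erase hl))]
  have hsum1 : ∑ l, D₁ l = ∑ l, D l := by
    rw [hEeq D₁, hEeq D, hEsame, hD₁i, hD₁j]; omega
  have hsq : ∑ l, (D l)^2 + 1 ≤ ∑ l, (D₁ l)^2 := by
    rw [hEeq (fun l => (D₁ l)^2), hEeq (fun l => (D l)^2)]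
    simp only [hEsame2, hD₁i, hD₁j]
    obtain ⟨b, hb⟩ : ∃ b, D i = b + 1 := ⟨D i - 1, by omega⟩
    have hbj : b + 1 ≤ D j := hb ▸ hDij
    rw [hb]
    have hb' : b + 1 - 1 = b := by omega
    rw [hb']
    nlinarith
  refine ⟨D₁, ⟨i, j, hij, hiP, hjP, hbound, hD₁⟩, ?_, ?_, ?_, hsum1, hsq⟩
  · intro l
    rcases eq_or_ne l i with rfl | h1
    · rw [hD₁i]; omega
    rcases eq_or_ne l j with rfl | h2
    · rw [hD₁j]; omega
    · rw [hD₁l l h1 h2]; exact ⟨hmin l, hmax l⟩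
  · intro l hl
    have h1 : l ≠ i := fun h => by subst h; omega
    have h2 : l ≠ j := fun h => by subst h; omega
    rw [hD₁l l h1 h2]; exact hl
  · intro l hl
    have h1 : l ≠ i := fun h => by subst h; omega
    have h2 : l ≠ j := fun h => by subst h; omega
    rw [hD₁l l h1 h2]; exact hl

lemma reach {n δ Δ Sig : ℕ} : ∀ (fuel : ℕ) (D : Fin n → ℕ),
    (∀ i, δ ≤ D i) → (∀ i, D i ≤ Δ) → (∑ i, D i = Sig) →
    (n * Δ ^ 2 ≤ ∑ i, (D i)^2 + fuel) →
    ∃ (k : ℕ) (c : ℕ → Fin n → ℕ), c 0 = D ∧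
      (∀ l < k, BalStep n δ Δ (c l) (c (l + 1))) ∧
      IsLBDS n δ Δ Sig (c k) := by
  intro fuel
  induction fuel with
  | zero =>
    intro D hmin hmax hsum hfuel
    by_cases hlb : IsLBDS n δ Δ Sig D
    · exact ⟨0, fun _ => D, rfl, fun l hl => absurd hl (by omega), hlb⟩
    · exfalso
      have hcard : 2 ≤ (Finset.univ.filter (fun i => δ < D i ∧ D i < Δ)).card := by
        by_contra h
        exact hlb ⟨hsum, fun i => ⟨hmin i, hmax i⟩, by omega⟩
      obtain ⟨D₁, _, hb, _, _, hs, hq⟩ := step_lemma D hmin hmax hcard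
      have hle : ∑ i, (D₁ i)^2 ≤ n * Δ ^ 2 := by
        calc ∑ i, (D₁ i)^2 ≤ ∑ _i : Fin n, Δ ^ 2 :=
              Finset.sum_le_sum fun i _ => Nat.pow_le_pow_left (hb i).2 2
          _ = n * Δ ^ 2 := by simp [Finset.sum_const, mul_comm]
      omega
  | succ m ih =>
    intro D hmin hmax hsum hfuel
    by_cases hlb : IsLBDS n δ Δ Sig D
    · exact ⟨0, fun _ => D, rfl, fun l hl => absurd hl (by omega), hlb⟩
    · have hcard : 2 ≤ (Finset.univ.filter (fun i => δ < D i ∧ D i < Δ)).card := by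
        by_contra h
        exact hlb ⟨hsum, fun i => ⟨hmin i, hmax i⟩, by omega⟩
      obtain ⟨D₁, hstep, hb, _, _, hs, hq⟩ := step_lemma D hmin hmax hcard
      obtain ⟨k, c, hc0, hcs, hck⟩ := ih D₁ (fun i => (hb i).1) (fun i => (hb i).2)
        (by rw [hs]; exact hsum) (by omega)
      refine ⟨k + 1, fun l => match l with | 0 => D | l + 1 => c l, rfl, ?_, hck⟩
      intro l hl
      match l with
      | 0 => simpa [hc0] using hstep
      | l + 1 => exact hcs l (by omega)

/-- If `D` is not least balanced, it has at least two entries strictly between `δ` and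
`Δ`; a balancing step preserves minimum, maximum and sum; and iterating balancing steps
reaches the least balanced sequence in finitely many steps. -/
theorem balancing_reaches_lbds (n δ Δ Sig : ℕ) (D : Fin n → ℕ)
    (hmin : ∀ i, δ ≤ D i) (hmax : ∀ i, D i ≤ Δ)
    (hminatt : ∃ i, D i = δ) (hmaxatt : ∃ i, D i = Δ)
    (hsum : ∑ i, D i = Sig)
    (hnot : ¬ IsLBDS n δ Δ Sig D) :
    2 ≤ (Finset.univ.filter (fun i => δ < D i ∧ D i < Δ)).card ∧
    (∃ D₁ : Fin n → ℕ, BalStep n δ Δ D D₁ ∧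
      (∀ i, δ ≤ D₁ i ∧ D₁ i ≤ Δ) ∧ (∃ i, D₁ i = δ) ∧ (∃ i, D₁ i = Δ) ∧
      ∑ i, D₁ i = Sig) ∧
    (∃ (k : ℕ) (c : ℕ → Fin n → ℕ), c 0 = D ∧
      (∀ l < k, BalStep n δ Δ (c l) (c (l + 1))) ∧
      IsLBDS n δ Δ Sig (c k)) := by
  have hcard : 2 ≤ (Finset.univ.filter (fun i => δ < D i ∧ D i < Δ)).card := by
    by_contra h
    exact hnot ⟨hsum, fun i => ⟨hmin i, hmax i⟩, by omega⟩
  obtain ⟨D₁, hstep, hb, hpδ, hpΔ, hs, _⟩ := step_lemma D hmin hmax hcard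
  refine ⟨hcard, ⟨D₁, hstep, hb, ?_, ?_, by rw [hs]; exact hsum⟩, ?_⟩
  · obtain ⟨i, hi⟩ := hminatt; exact ⟨i, hpδ i hi⟩
  · obtain ⟨i, hi⟩ := hmaxatt; exact ⟨i, hpΔ i hi⟩
  · exact reach (n * Δ ^ 2) D hmin hmax hsum (by omega)
end

section
/- Let H be a simple t-uniform hypergraph. If v_i and v_j are vertices with d_H(v_i) < d_H(v_j), then there exists a simple t-uniform hypergraph H'' obtained from H by one hinge-flip whose degree sequence agrees with that of H except that the degree of v_j is decreased by 1 and the degree of v_i is increased by 1. -/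
/-- If `d_H(v_i) < d_H(v_j)`, then a single hinge-flip yields a simple `t`-uniform
hypergraph whose degrees agree with those of `H`, except that the degree of `v_j`
decreases by one and the degree of `v_i` increases by one. -/
theorem hinge_flip_adjusts_degrees (n t : ℕ) (H : Finset (Finset (Fin n)))
    (hH : ∀ e ∈ H, e.card = t) (vi vj : Fin n)
    (hlt : hdeg H vi < hdeg H vj) :
    ∃ H'' : Finset (Finset (Fin n)),
      (∃ e ∈ H, vj ∈ e ∧ vi ∉ e ∧ insert vi (e.erase vj) ∉ H ∧
        H'' = insert (insert vi (e.erase vj)) (H.erase e)) ∧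
      (∀ e ∈ H'', e.card = t) ∧
      (∀ v, v ≠ vi → v ≠ vj → hdeg H'' v = hdeg H v) ∧
      hdeg H'' vj + 1 = hdeg H vj ∧
      hdeg H'' vi = hdeg H vi + 1 := by
  have hne : vi ≠ vj := by rintro rfl; exact lt_irrefl _ hlt
  have key : ∃ e ∈ H, vj ∈ e ∧ vi ∉ e ∧ insert vi (e.erase vj) ∉ H := by
    by_contra hcon
    push_neg at hcon
    set A := H.filter (fun e => vj ∈ e ∧ vi ∉ e) with hA
    set B := H.filter (fun e => vi ∈ e ∧ vj ∉ e) with hB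
    have hrec : ∀ e : Finset (Fin n), vj ∈ e → vi ∉ e →
        insert vj ((insert vi (e.erase vj)).erase vi) = e := by
      intro e hje hie
      rw [Finset.erase_insert (by simp [Finset.mem_erase, hie]),
        Finset.insert_erase hje]
    have hcard : A.card ≤ B.card := by
      apply Finset.card_le_card_of_injOn (fun e => insert vi (e.erase vj))
      · intro e heA
        rw [hA, Finset.mem_coe, Finset.mem_filter] at heA
        obtain ⟨heH, hje, hie⟩ := heA
        rw [hB, Finset.mem_coe, Finset.mem_filter]
        refine ⟨hcon e heH hje hie, Finset.mem_insert_self _ _, ?_⟩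
        simp [Finset.mem_insert, hne.symm, Finset.mem_erase]
      · intro e heA e' heA' heq
        rw [Finset.mem_coe, hA, Finset.mem_filter] at heA heA'
        rw [← hrec e heA.2.1 heA.2.2, ← hrec e' heA'.2.1 heA'.2.2]
        simp only at heq
        rw [heq]
    have split : ∀ (a b : Fin n), hdeg H a =
        (H.filter fun e => a ∈ e ∧ b ∈ e).card +
          (H.filter fun e => a ∈ e ∧ b ∉ e).card := by
      intro a b
      rw [hdeg, ← Finset.filter_filter, ← Finset.filter_filter]
      exact (Finset.card_filter_add_card_filter_not _).symm
    have hsj := split vj vi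
    have hsi := split vi vj
    have hcomm : (H.filter fun e => vj ∈ e ∧ vi ∈ e) =
        (H.filter fun e => vi ∈ e ∧ vj ∈ e) := by
      apply Finset.filter_congr
      intro x _
      exact and_comm
    rw [hcomm] at hsj
    rw [← hA] at hsj
    rw [← hB] at hsi
    omega
  obtain ⟨e, heH, hje, hie, hfH⟩ := key
  set f := insert vi (e.erase vj) with hf
  have hvif : vi ∈ f := Finset.mem_insert_self _ _
  have hvjf : vj ∉ f := by simp [hf, Finset.mem_insert, Finset.mem_erase, hne.symm]
  have hcardf : f.card = t := by
    rw [hf, Finset.card_insert_of_notMem (by simp [Finset.mem_erase, hie]),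
      Finset.card_erase_of_mem hje, hH e heH]
    have : 1 ≤ t := by
      rw [← hH e heH]; exact Finset.card_pos.mpr ⟨vj, hje⟩
    omega
  refine ⟨insert f (H.erase e), ⟨e, heH, hje, hie, hfH, rfl⟩, ?_, ?_, ?_, ?_⟩
  · intro e' he'
    rcases Finset.mem_insert.mp he' with rfl | h
    · exact hcardf
    · exact hH e' (Finset.mem_of_mem_erase h)
  · intro v hvi hvj
    have hvf : v ∈ f ↔ v ∈ e := by
      simp [hf, Finset.mem_insert, Finset.mem_erase, hvi, hvj]
    by_cases hve : v ∈ e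
    · have hmemf : e ∈ H.filter (fun e' => v ∈ e') := Finset.mem_filter.mpr ⟨heH, hve⟩
      have hfnot : f ∉ (H.filter fun e' => v ∈ e').erase e := fun hmem =>
        hfH (Finset.mem_filter.mp (Finset.mem_of_mem_erase hmem)).1
      simp only [hdeg]
      rw [Finset.filter_insert, if_pos (hvf.mpr hve), Finset.filter_erase,
        Finset.card_insert_of_notMem hfnot, Finset.card_erase_of_mem hmemf]
      have : 1 ≤ (H.filter fun e' => v ∈ e').card :=
        Finset.card_pos.mpr ⟨e, hmemf⟩
      omega
    · have henot : e ∉ H.filter (fun e' => v ∈ e') := fun hmem =>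
        hve (Finset.mem_filter.mp hmem).2
      simp only [hdeg]
      rw [Finset.filter_insert, if_neg (fun h => hve (hvf.mp h)), Finset.filter_erase,
        Finset.erase_eq_of_notMem henot]
  · simp only [hdeg]
    rw [Finset.filter_insert, if_neg hvjf, Finset.filter_erase]
    exact Finset.card_erase_add_one (Finset.mem_filter.mpr ⟨heH, hje⟩)
  · have henot : e ∉ H.filter (fun e' => vi ∈ e') := fun hmem =>
      hie (Finset.mem_filter.mp hmem).2
    have hfnot : f ∉ H.filter (fun e' => vi ∈ e') := fun hmem =>
      hfH (Finset.mem_filter.mp hmem).1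
    simp only [hdeg]
    rw [Finset.filter_insert, if_pos hvif, Finset.filter_erase,
      Finset.erase_eq_of_notMem henot, Finset.card_insert_of_notMem hfnot]
end

section
/- Fix t ≥ 3 and a disjoint vertex partition V = V_L ∪ V_N ∪ V_S with |V_L| = |V_N| = m. Consider any simple t-uniform hypergraph H on V whose degree sum over V_L equals m·C(2m−1, t−1) + |V_S|·d·(t−1) and whose degree sum over V_S equals |V_S|·d. Then H contains all C(m, t) edges inside V_L, all C(2m, t) − C(m, t) − C(m, t) edges meeting both V_L and V_N within V_L ∪ V_N, every edge meeting V_S contains exactly one vertex of V_S and t−1 vertices of V_L, and no edge contains vertices of both V_N and V_S. Consequently, the edges of H contained entirely in V_N form a t-uniform hypergraph realizing the residual degrees on V_N. -/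
open Finset

lemma le_pred_mul_of_add_add_eq {a b c t : ℕ} (h : a + b + c = t) (hc : 0 < c) :
    a ≤ (t - 1) * c := by
  obtain ⟨c, rfl⟩ := Nat.exists_eq_add_one_of_ne_zero hc.ne'
  rw [mul_add_one]
  omega

lemma eq_one_of_add_add_eq_of_eq_pred_mul {a b c t : ℕ} (h : a + b + c = t) (hc : 0 < c)
    (heq : a = (t - 1) * c) : c = 1 ∧ b = 0 := by
  obtain ⟨c, rfl⟩ := Nat.exists_eq_add_one_of_ne_zero hc.ne'
  rw [mul_add_one] at heq
  have : (t - 1) * c = 0 ∧ c = 0 ∧ b = 0 := by omega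
  omega

section
variable {V : Type*} [DecidableEq V]

lemma sum_hdeg_eq_sum_card_inter (H : Finset (Finset V)) (A : Finset V) :
    ∑ v ∈ A, hdeg H v = ∑ e ∈ H, #(e ∩ A) := by
  simp only [hdeg, card_filter]
  rw [sum_comm]
  exact sum_congr rfl fun e _ => by rw [← card_filter, filter_mem_eq_inter, inter_comm]

lemma hdeg_powersetCard {s : Finset V} {v : V} (hv : v ∈ s) {n : ℕ} (hn : 1 ≤ n) :
    hdeg (s.powersetCard n) v = (#s - 1).choose (n - 1) := by
  simpa [hdeg, singleton_subset_iff] using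
    card_filter_powersetCard_subset {v} s n (singleton_subset_iff.2 hv) (by simpa using hn)

lemma sum_card_inter_powersetCard {s A : Finset V} (hA : A ⊆ s) {n : ℕ} (hn : 1 ≤ n) :
    ∑ e ∈ s.powersetCard n, #(e ∩ A) = #A * (#s - 1).choose (n - 1) := by
  rw [← sum_hdeg_eq_sum_card_inter, sum_congr rfl fun v hv => hdeg_powersetCard (hA hv) hn,
    sum_const, smul_eq_mul]

lemma hdeg_congr {H H' : Finset (Finset V)} {v : V} (h : ∀ e, v ∈ e → (e ∈ H ↔ e ∈ H')) :
    hdeg H v = hdeg H' v := by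
  unfold hdeg
  congr 1
  ext e
  simp only [mem_filter]
  grind

lemma hdeg_filter_add_hdeg_filter_not (H : Finset (Finset V)) (p : Finset V → Prop)
    [DecidablePred p] (v : V) :
    hdeg (H.filter p) v + hdeg (H.filter (¬ p ·)) v = hdeg H v := by
  unfold hdeg
  rw [filter_comm, filter_comm (¬ p ·), card_filter_add_card_filter_not]

variable {L N S : Finset V}

lemma card_inter_add_card_inter_add_card_inter (hLN : Disjoint L N) (hLS : Disjoint L S)
    (hNS : Disjoint N S) {e : Finset V} (he : e ⊆ L ∪ N ∪ S) :
    #(e ∩ L) + #(e ∩ N) + #(e ∩ S) = #e := by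
  rw [← card_union_of_disjoint (hLN.mono inter_subset_right inter_subset_right),
    ← card_union_of_disjoint (disjoint_union_left.2
      ⟨hLS.mono inter_subset_right inter_subset_right,
        hNS.mono inter_subset_right inter_subset_right⟩),
    ← inter_union_distrib_left, ← inter_union_distrib_left, inter_eq_left.2 he]

variable {H : Finset (Finset V)} {t : ℕ}

theorem rigid_of_extremal_degree_sums (hLN : Disjoint L N) (hLS : Disjoint L S)
    (hNS : Disjoint N S) (hHV : ∀ e ∈ H, e ⊆ L ∪ N ∪ S) (hH : ∀ e ∈ H, #e = t) (ht : 1 ≤ t)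
    {D : ℕ} (hdegL : ∑ v ∈ L, hdeg H v = #L * (#(L ∪ N) - 1).choose (t - 1) + D * (t - 1))
    (hdegS : ∑ v ∈ S, hdeg H v = D) :
    (∀ A ∈ (L ∪ N).powersetCard t, (A ∩ L).Nonempty → A ∈ H) ∧
    (∀ e ∈ H, (e ∩ S).Nonempty → #(e ∩ S) = 1 ∧ #(e ∩ L) = t - 1 ∧ e ∩ N = ∅) := by
  set K := (L ∪ N).powersetCard t
  set H₁ := H.filter (fun e => ¬ (e ∩ S).Nonempty)
  set H₂ := H.filter (fun e => (e ∩ S).Nonempty)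
  have hsplit : ∀ e ∈ H, #(e ∩ L) + #(e ∩ N) + #(e ∩ S) = t := fun e he =>
    (card_inter_add_card_inter_add_card_inter hLN hLS hNS (hHV e he)).trans (hH e he)
  have hH₁K : H₁ ⊆ K := fun e he => by
    rw [mem_filter] at he
    exact mem_powersetCard.2
      ⟨Disjoint.left_le_of_le_sup_right (hHV e he.1)
        (disjoint_iff_inter_eq_empty.2 (not_nonempty_iff_eq_empty.1 he.2)), hH e he.1⟩
  have hpt₂ : ∀ e ∈ H₂, #(e ∩ L) ≤ (t - 1) * #(e ∩ S) := fun e he =>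
    le_pred_mul_of_add_add_eq (hsplit e (mem_filter.1 he).1) (card_pos.2 (mem_filter.1 he).2)
  have hS₂ : ∑ e ∈ H₂, #(e ∩ S) = D := by
    rw [← hdegS, sum_hdeg_eq_sum_card_inter, ← sum_filter_add_sum_filter_not H
      (fun e => (e ∩ S).Nonempty), sum_eq_zero (s := H₁) fun e he => ?_, add_zero]
    rw [card_eq_zero, ← not_nonempty_iff_eq_empty]
    exact (mem_filter.1 he).2
  have hL : ∑ e ∈ H₂, #(e ∩ L) + ∑ e ∈ H₁, #(e ∩ L) = ∑ A ∈ K, #(A ∩ L) + (t - 1) * D := by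
    rw [sum_filter_add_sum_filter_not, ← sum_hdeg_eq_sum_card_inter, hdegL,
      sum_card_inter_powersetCard subset_union_left ht, mul_comm D]
  have hle₁ : ∑ e ∈ H₁, #(e ∩ L) ≤ ∑ A ∈ K, #(A ∩ L) := sum_le_sum_of_subset hH₁K
  have hle₂ : ∑ e ∈ H₂, #(e ∩ L) ≤ ∑ e ∈ H₂, (t - 1) * #(e ∩ S) := sum_le_sum hpt₂
  rw [← mul_sum, hS₂] at hle₂
  -- `hle₁` and `hle₂` add up to the equality `hL`, so both are tight.
  refine ⟨fun A hA hAL => ?_, fun e he heS => ?_⟩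
  · by_contra hAH
    have : ∑ e ∈ H₁, #(e ∩ L) < ∑ A ∈ K, #(A ∩ L) :=
      sum_lt_sum_of_subset hH₁K hA (fun h => hAH (mem_filter.1 h).1) (card_pos.2 hAL)
        fun _ _ _ => Nat.zero_le _
    omega
  · have heq₂ : ∑ e ∈ H₂, #(e ∩ L) = ∑ e ∈ H₂, (t - 1) * #(e ∩ S) := by
      rw [← mul_sum, hS₂]; omega
    have ⟨hS1, hN0⟩ := eq_one_of_add_add_eq_of_eq_pred_mul (hsplit e he) (card_pos.2 heS)
      ((sum_eq_sum_iff_of_le hpt₂).1 heq₂ e (mem_filter.2 ⟨he, heS⟩))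
    have := hsplit e he
    exact ⟨hS1, by omega, card_eq_zero.1 hN0⟩

lemma hdeg_eq_hdeg_filter_subset_add (hHV : ∀ e ∈ H, e ⊆ L ∪ N ∪ S)
    (hH : ∀ e ∈ H, #e = t) (ht : 1 ≤ t)
    (hpool : ∀ A ∈ (L ∪ N).powersetCard t, (A ∩ L).Nonempty → A ∈ H)
    (hNS : ∀ e ∈ H, ¬ ((e ∩ N).Nonempty ∧ (e ∩ S).Nonempty)) {v : V} (hv : v ∈ N) :
    hdeg (H.filter (· ⊆ N)) v + ((#(L ∪ N) - 1).choose (t - 1) - (#N - 1).choose (t - 1))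
      = hdeg H v := by
  set K := (L ∪ N).powersetCard t
  have hagree : hdeg (H.filter (¬ · ⊆ N)) v = hdeg (K.filter (¬ · ⊆ N)) v :=
    hdeg_congr fun e hve => by
      simp only [K, mem_filter, mem_powersetCard]
      constructor
      · rintro ⟨he, heN⟩
        have heS : Disjoint e S := not_not.1 fun heS =>
          hNS e he ⟨⟨v, mem_inter.2 ⟨hve, hv⟩⟩, not_disjoint_iff_nonempty_inter.1 heS⟩
        exact ⟨⟨Disjoint.left_le_of_le_sup_right (hHV e he) heS, hH e he⟩, heN⟩
      · rintro ⟨⟨heLN, het⟩, heN⟩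
        obtain ⟨x, hxe, hxN⟩ := not_subset.1 heN
        refine ⟨hpool e (mem_powersetCard.2 ⟨heLN, het⟩) ⟨x, mem_inter.2 ⟨hxe, ?_⟩⟩, heN⟩
        exact (mem_union.1 (heLN hxe)).resolve_right hxN
  have hKN : K.filter (· ⊆ N) = N.powersetCard t := by
    ext A
    simp only [K, mem_filter, mem_powersetCard]
    exact ⟨fun h => ⟨h.2, h.1.2⟩, fun h => ⟨⟨h.1.trans subset_union_right, h.2⟩, h.1⟩⟩
  have hK := hdeg_filter_add_hdeg_filter_not K (· ⊆ N) v
  rw [hKN, hdeg_powersetCard (mem_union_right _ hv) ht, hdeg_powersetCard hv ht] at hK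
  rw [← hdeg_filter_add_hdeg_filter_not H (· ⊆ N) v, hagree]
  omega

end

theorem gadget_rigidity_general (t m d : ℕ) (ht : 3 ≤ t)
    {V : Type*} [Fintype V] [DecidableEq V]
    (L N S : Finset V)
    (hLN : Disjoint L N) (hLS : Disjoint L S) (hNS : Disjoint N S)
    (hcover : L ∪ N ∪ S = Finset.univ)
    (hLcard : L.card = m) (hNcard : N.card = m)
    (H : Finset (Finset V)) (hH : ∀ e ∈ H, e.card = t)
    (hdegL : ∑ v ∈ L, hdeg H v
      = m * (2 * m - 1).choose (t - 1) + S.card * d * (t - 1))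
    (hdegS : ∑ v ∈ S, hdeg H v = S.card * d) :
    (∀ e : Finset V, e ⊆ L → e.card = t → e ∈ H) ∧
    (∀ e : Finset V, e ⊆ L ∪ N → e.card = t →
      (e ∩ L).Nonempty → (e ∩ N).Nonempty → e ∈ H) ∧
    (∀ e ∈ H, (e ∩ S).Nonempty → (e ∩ S).card = 1 ∧ (e ∩ L).card = t - 1) ∧
    (∀ e ∈ H, ¬ ((e ∩ N).Nonempty ∧ (e ∩ S).Nonempty)) ∧
    (∀ v ∈ N, hdeg (H.filter (fun e => e ⊆ N)) v
      + ((2 * m - 1).choose (t - 1) - (m - 1).choose (t - 1)) = hdeg H v) := by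
  have ht₁ : 1 ≤ t := by omega
  have hLNcard : #(L ∪ N) = 2 * m := by rw [card_union_of_disjoint hLN]; omega
  have hHV : ∀ e ∈ H, e ⊆ L ∪ N ∪ S := fun e _ => hcover ▸ subset_univ e
  obtain ⟨hpool, hmeetS⟩ := rigid_of_extremal_degree_sums hLN hLS hNS hHV hH ht₁
    (by rw [hdegL, hLNcard, hLcard]) hdegS
  have hNS' : ∀ e ∈ H, ¬ ((e ∩ N).Nonempty ∧ (e ∩ S).Nonempty) := fun e he ⟨heN, heS⟩ =>
    heN.ne_empty (hmeetS e he heS).2.2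
  refine ⟨fun e heL het => hpool e (mem_powersetCard.2 ⟨heL.trans subset_union_left, het⟩) ?_,
    fun e heLN het heL _ => hpool e (mem_powersetCard.2 ⟨heLN, het⟩) heL,
    fun e he heS => ⟨(hmeetS e he heS).1, (hmeetS e he heS).2.1⟩, hNS', fun v hv => ?_⟩
  · rw [inter_eq_left.2 heL, ← card_pos, het]; omega
  · rw [← hLNcard, ← hNcard]
    exact hdeg_eq_hdeg_filter_subset_add hHV hH ht₁ hpool hNS' hv

/-- Rigidity of the gadget: if the degree sums over `V_L` and `V_S` attain the extremal
values, then `H` contains all edges inside `V_L`, all mixed `V_L`–`V_N` edges, every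
edge meeting `V_S` has exactly one `V_S`-vertex and `t-1` `V_L`-vertices, no edge meets
both `V_N` and `V_S`, and the edges inside `V_N` realize the residual degrees on `V_N`. -/
theorem gadget_rigidity (t m d : ℕ) (ht : 3 ≤ t) (htm : t ≤ m) (hd : 0 < d)
    {V : Type*} [Fintype V] [DecidableEq V]
    (L N S : Finset V)
    (hLN : Disjoint L N) (hLS : Disjoint L S) (hNS : Disjoint N S)
    (hcover : L ∪ N ∪ S = Finset.univ)
    (hLcard : L.card = m) (hNcard : N.card = m)
    (H : Finset (Finset V)) (hH : ∀ e ∈ H, e.card = t)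
    (hdegL : ∑ v ∈ L, hdeg H v
      = m * (2 * m - 1).choose (t - 1) + S.card * d * (t - 1))
    (hdegS : ∑ v ∈ S, hdeg H v = S.card * d) :
    (∀ e : Finset V, e ⊆ L → e.card = t → e ∈ H) ∧
    (∀ e : Finset V, e ⊆ L ∪ N → e.card = t →
      (e ∩ L).Nonempty → (e ∩ N).Nonempty → e ∈ H) ∧
    (∀ e ∈ H, (e ∩ S).Nonempty → (e ∩ S).card = 1 ∧ (e ∩ L).card = t - 1) ∧
    (∀ e ∈ H, ¬ ((e ∩ N).Nonempty ∧ (e ∩ S).Nonempty)) ∧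
    (∀ v ∈ N, hdeg (H.filter (fun e => e ⊆ N)) v
      + ((2 * m - 1).choose (t - 1) - (m - 1).choose (t - 1)) = hdeg H v) :=
  gadget_rigidity_general t m d ht L N S hLN hLS hNS hcover hLcard hNcard H hH hdegL hdegS
end

section
/- Let t ≥ 3 and m, d, s be positive integers with C(m, t−1) ≥ d and nonnegative integers x, n_1, …, n_{t−1}, s_1, …, s_{t−1}, q_{i,j} (1 ≤ j ≤ t−1, 1 ≤ i ≤ t−1−j) satisfying x ≤ C(m, t), n_i ≤ C(m, i)·C(m, t−i) for all i, and Σ_{j} s_j·j + Σ_{i,j} q_{i,j}·j ≤ s·d. If t·x + Σ_i n_i·(t−i) + Σ_j s_j·(t−j) + Σ_{i,j} q_{i,j}·(t−i−j) = m·C(2m−1, t−1) + s·d·(t−1), then x = C(m, t), n_i = C(m, i)·C(m, t−i) for every i, s_1 = s·d, s_j = 0 for all j ≥ 2, and q_{i,j} = 0 for all i, j. -/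
open Finset

lemma rigidity_vand (t m : ℕ) (ht : 1 ≤ t) (hm : 0 < m) :
    m * (2 * m - 1).choose (t - 1)
      = ∑ i ∈ range t, m.choose i * (m.choose (t - i) * (t - i)) := by
  have h2m : 2 * m - 1 = m + (m - 1) := by omega
  rw [h2m, Nat.add_choose_eq, Finset.Nat.sum_antidiagonal_eq_sum_range_succ_mk]
  have ht1 : t - 1 + 1 = t := by omega
  rw [show (t - 1).succ = t by omega, Finset.mul_sum]
  refine sum_congr rfl fun i hi => ?_
  have hi' : i < t := mem_range.mp hi
  have h : m * (m - 1).choose (t - 1 - i) = m.choose (t - i) * (t - i) := by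
    have h0 := Nat.add_one_mul_choose_eq (m - 1) (t - 1 - i)
    rw [show m - 1 + 1 = m by omega, show t - 1 - i + 1 = t - i by omega] at h0
    exact h0
  show m * (m.choose i * (m - 1).choose (t - 1 - i)) = _
  rw [mul_left_comm, h]

lemma rigidity_key (t m : ℕ) (ht : 1 ≤ t) (hm : 0 < m) :
    t * m.choose t + ∑ i ∈ Icc 1 (t - 1), m.choose i * m.choose (t - i) * (t - i)
      = m * (2 * m - 1).choose (t - 1) := by
  rw [rigidity_vand t m ht hm]
  have hr : range t = insert 0 (Icc 1 (t - 1)) := by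
    ext i; simp only [mem_range, mem_insert, mem_Icc]; omega
  rw [hr, sum_insert (by simp)]
  have hs : ∀ i ∈ Icc 1 (t - 1),
      m.choose i * (m.choose (t - i) * (t - i)) = m.choose i * m.choose (t - i) * (t - i) :=
    fun i _ => (mul_assoc _ _ _).symm
  rw [sum_congr rfl hs]
  simp [mul_comm]

/-- The rigidity counting argument: equality in the degree-sum bound forces all edge
counts to attain their extremal values. -/
theorem rigidity_counting (t m d s : ℕ) (ht : 3 ≤ t) (hm : 0 < m)
    (hd : 0 < d) (hs : 0 < s) (hC : d ≤ m.choose (t - 1))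
    (x : ℕ) (nn ss : ℕ → ℕ) (q : ℕ → ℕ → ℕ)
    (hx : x ≤ m.choose t)
    (hn : ∀ i ∈ Icc 1 (t - 1), nn i ≤ m.choose i * m.choose (t - i))
    (hsq : ∑ j ∈ Icc 1 (t - 1), ss j * j
        + ∑ j ∈ Icc 1 (t - 1), ∑ i ∈ Icc 1 (t - 1 - j), q i j * j ≤ s * d)
    (heq : t * x + ∑ i ∈ Icc 1 (t - 1), nn i * (t - i)
        + ∑ j ∈ Icc 1 (t - 1), ss j * (t - j)
        + ∑ j ∈ Icc 1 (t - 1), ∑ i ∈ Icc 1 (t - 1 - j), q i j * (t - i - j)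
        = m * (2 * m - 1).choose (t - 1) + s * d * (t - 1)) :
    x = m.choose t ∧
    (∀ i ∈ Icc 1 (t - 1), nn i = m.choose i * m.choose (t - i)) ∧
    ss 1 = s * d ∧
    (∀ j ∈ Icc 2 (t - 1), ss j = 0) ∧
    (∀ j ∈ Icc 1 (t - 1), ∀ i ∈ Icc 1 (t - 1 - j), q i j = 0) := by
  have ht1 : 1 ≤ t := by omega
  -- abbreviations
  have hkey := rigidity_key t m ht1 hm
  rw [← hkey] at heq
  -- bounds on the first two blocks
  have hA : t * x ≤ t * m.choose t := Nat.mul_le_mul_left t hx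
  have hB : ∑ i ∈ Icc 1 (t - 1), nn i * (t - i)
      ≤ ∑ i ∈ Icc 1 (t - 1), m.choose i * m.choose (t - i) * (t - i) :=
    sum_le_sum fun i hi => Nat.mul_le_mul_right _ (hn i hi)
  -- termwise bounds on the s-block and q-block
  have hSterm : ∀ j ∈ Icc 1 (t - 1), ss j * (t - j) ≤ (t - 1) * (ss j * j) := by
    intro j hj
    simp only [mem_Icc] at hj
    have h1 : t - j ≤ (t - 1) * j := by
      calc t - j ≤ (t - 1) * 1 := by omega
        _ ≤ (t - 1) * j := Nat.mul_le_mul_left _ hj.1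
    calc ss j * (t - j) ≤ ss j * ((t - 1) * j) := Nat.mul_le_mul_left _ h1
      _ = (t - 1) * (ss j * j) := by ring
  have hQterm : ∀ j ∈ Icc 1 (t - 1), ∀ i ∈ Icc 1 (t - 1 - j),
      q i j * (t - i - j) ≤ (t - 1) * (q i j * j) := by
    intro j hj i hi
    simp only [mem_Icc] at hj hi
    have h1 : t - i - j ≤ (t - 1) * j := by
      calc t - i - j ≤ (t - 1) * 1 := by omega
        _ ≤ (t - 1) * j := Nat.mul_le_mul_left _ hj.1
    calc q i j * (t - i - j) ≤ q i j * ((t - 1) * j) := Nat.mul_le_mul_left _ h1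
      _ = (t - 1) * (q i j * j) := by ring
  have hS : ∑ j ∈ Icc 1 (t - 1), ss j * (t - j)
      ≤ ∑ j ∈ Icc 1 (t - 1), (t - 1) * (ss j * j) := sum_le_sum hSterm
  have hQinner : ∀ j ∈ Icc 1 (t - 1),
      ∑ i ∈ Icc 1 (t - 1 - j), q i j * (t - i - j)
        ≤ ∑ i ∈ Icc 1 (t - 1 - j), (t - 1) * (q i j * j) :=
    fun j hj => sum_le_sum (hQterm j hj)
  have hQ : ∑ j ∈ Icc 1 (t - 1), ∑ i ∈ Icc 1 (t - 1 - j), q i j * (t - i - j)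
      ≤ ∑ j ∈ Icc 1 (t - 1), ∑ i ∈ Icc 1 (t - 1 - j), (t - 1) * (q i j * j) :=
    sum_le_sum hQinner
  -- the primed sums equal (t-1) * (linear sums)
  have hfactor : ∑ j ∈ Icc 1 (t - 1), (t - 1) * (ss j * j)
      + ∑ j ∈ Icc 1 (t - 1), ∑ i ∈ Icc 1 (t - 1 - j), (t - 1) * (q i j * j)
      = (t - 1) * (∑ j ∈ Icc 1 (t - 1), ss j * j
        + ∑ j ∈ Icc 1 (t - 1), ∑ i ∈ Icc 1 (t - 1 - j), q i j * j) := by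
    rw [mul_add, Finset.mul_sum, Finset.mul_sum]
    congr 1
    refine sum_congr rfl fun j hj => ?_
    rw [Finset.mul_sum]
  have hmulle : (t - 1) * (∑ j ∈ Icc 1 (t - 1), ss j * j
        + ∑ j ∈ Icc 1 (t - 1), ∑ i ∈ Icc 1 (t - 1 - j), q i j * j)
      ≤ (t - 1) * (s * d) := Nat.mul_le_mul_left _ hsq
  have hKeq : s * d * (t - 1) = (t - 1) * (s * d) := by ring
  rw [hKeq] at heq
  -- extract equalities
  have hABeq : t * x = t * m.choose t ∧
      (∑ i ∈ Icc 1 (t - 1), nn i * (t - i)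
        = ∑ i ∈ Icc 1 (t - 1), m.choose i * m.choose (t - i) * (t - i)) ∧
      (∑ j ∈ Icc 1 (t - 1), ss j * (t - j)
        = ∑ j ∈ Icc 1 (t - 1), (t - 1) * (ss j * j)) ∧
      (∑ j ∈ Icc 1 (t - 1), ∑ i ∈ Icc 1 (t - 1 - j), q i j * (t - i - j)
        = ∑ j ∈ Icc 1 (t - 1), ∑ i ∈ Icc 1 (t - 1 - j), (t - 1) * (q i j * j)) ∧
      ((t - 1) * (∑ j ∈ Icc 1 (t - 1), ss j * j
        + ∑ j ∈ Icc 1 (t - 1), ∑ i ∈ Icc 1 (t - 1 - j), q i j * j)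
        = (t - 1) * (s * d)) := by
    omega
  obtain ⟨hAeq, hBeq, hSeq, hQeq, hLeq⟩ := hABeq
  -- x
  have hxeq : x = m.choose t := by
    have := Nat.eq_of_mul_eq_mul_left (show 0 < t by omega) hAeq
    exact this
  -- nn
  have hnn : ∀ i ∈ Icc 1 (t - 1), nn i = m.choose i * m.choose (t - i) := by
    intro i hi
    have hterm := ((Finset.sum_eq_sum_iff_of_le
      (fun i hi => Nat.mul_le_mul_right _ (hn i hi))).mp hBeq) i hi
    simp only [mem_Icc] at hi
    exact Nat.eq_of_mul_eq_mul_right (show 0 < t - i by omega) hterm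
  -- ss termwise equality
  have hssterm : ∀ j ∈ Icc 1 (t - 1), ss j * (t - j) = (t - 1) * (ss j * j) :=
    (Finset.sum_eq_sum_iff_of_le hSterm).mp hSeq
  -- q termwise equality
  have hqterm : ∀ j ∈ Icc 1 (t - 1), ∀ i ∈ Icc 1 (t - 1 - j),
      q i j * (t - i - j) = (t - 1) * (q i j * j) := by
    intro j hj
    have houter := ((Finset.sum_eq_sum_iff_of_le hQinner).mp hQeq) j hj
    exact (Finset.sum_eq_sum_iff_of_le (hQterm j hj)).mp houter
  -- ss j = 0 for j ≥ 2
  have hss0 : ∀ j ∈ Icc 2 (t - 1), ss j = 0 := by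
    intro j hj
    simp only [mem_Icc] at hj
    have hj' : j ∈ Icc 1 (t - 1) := by simp only [mem_Icc]; omega
    have heqj := hssterm j hj'
    by_contra hne
    have hpos : 0 < ss j := Nat.pos_of_ne_zero hne
    have hlt : t - j < (t - 1) * j := by
      calc t - j < (t - 1) * 1 := by omega
        _ ≤ (t - 1) * j := Nat.mul_le_mul_left _ (by omega)
    have : ss j * (t - j) < ss j * ((t - 1) * j) :=
      mul_lt_mul_of_pos_left hlt hpos
    rw [show ss j * ((t - 1) * j) = (t - 1) * (ss j * j) by ring] at this
    omega
  -- q = 0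
  have hq0 : ∀ j ∈ Icc 1 (t - 1), ∀ i ∈ Icc 1 (t - 1 - j), q i j = 0 := by
    intro j hj i hi
    have heqj := hqterm j hj i hi
    simp only [mem_Icc] at hj hi
    by_contra hne
    have hpos : 0 < q i j := Nat.pos_of_ne_zero hne
    have hlt : t - i - j < (t - 1) * j := by
      calc t - i - j < (t - 1) * 1 := by omega
        _ ≤ (t - 1) * j := Nat.mul_le_mul_left _ (by omega)
    have : q i j * (t - i - j) < q i j * ((t - 1) * j) :=
      mul_lt_mul_of_pos_left hlt hpos
    rw [show q i j * ((t - 1) * j) = (t - 1) * (q i j * j) by ring] at this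
    omega
  -- linear sums equal s*d
  have hlin : ∑ j ∈ Icc 1 (t - 1), ss j * j
      + ∑ j ∈ Icc 1 (t - 1), ∑ i ∈ Icc 1 (t - 1 - j), q i j * j = s * d :=
    Nat.eq_of_mul_eq_mul_left (show 0 < t - 1 by omega) hLeq
  -- Qj = 0
  have hQj : ∑ j ∈ Icc 1 (t - 1), ∑ i ∈ Icc 1 (t - 1 - j), q i j * j = 0 := by
    refine sum_eq_zero fun j hj => sum_eq_zero fun i hi => ?_
    rw [hq0 j hj i hi, zero_mul]
  -- Sj = ss 1
  have hSj : ∑ j ∈ Icc 1 (t - 1), ss j * j = ss 1 := by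
    have hsplit : Icc 1 (t - 1) = insert 1 (Icc 2 (t - 1)) := by
      ext j; simp only [mem_Icc, mem_insert]; omega
    rw [hsplit, sum_insert (by simp)]
    have : ∑ j ∈ Icc 2 (t - 1), ss j * j = 0 :=
      sum_eq_zero fun j hj => by rw [hss0 j hj, zero_mul]
    rw [this, mul_one, add_zero]
  have hss1 : ss 1 = s * d := by omega
  exact ⟨hxeq, hnn, hss1, hss0, hq0⟩
end

section
/- For every m ≥ 1 and t ≥ 1, the identity m·C(2m−1, t−1) = t·C(m, t) + Σ_{i=1}^{t−1} (t−i)·C(m, i)·C(m, t−i) holds. -/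
open Finset

/-- Counting incidences between a fixed `m`-set `V_L` inside a `2m`-set and all
`t`-subsets meeting `V_L`:
`m·C(2m−1, t−1) = t·C(m, t) + Σ_{i=1}^{t−1} (t−i)·C(m, i)·C(m, t−i)`. -/
theorem incidence_identity (m t : ℕ) (hm : 1 ≤ m) (ht : 1 ≤ t) :
    m * (2 * m - 1).choose (t - 1)
      = t * m.choose t
        + ∑ i ∈ Icc 1 (t - 1), (t - i) * (m.choose i * m.choose (t - i)) := by
  rcases Nat.exists_eq_succ_of_ne_zero (by omega : m ≠ 0) with ⟨m, rfl⟩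
  rcases Nat.exists_eq_succ_of_ne_zero (by omega : t ≠ 0) with ⟨t, rfl⟩
  have h2 : 2 * (m + 1) - 1 = (m + 1) + m := by omega
  have key : (m + 1) * ((m + 1) + m).choose t
      = ∑ k ∈ range (t + 1),
          (t + 1 - k) * ((m + 1).choose k * (m + 1).choose (t + 1 - k)) := by
    rw [Nat.add_choose_eq, Finset.mul_sum,
      Finset.Nat.sum_antidiagonal_eq_sum_range_succ
        (fun a b => (m + 1) * ((m + 1).choose a * m.choose b)) t]
    refine Finset.sum_congr rfl fun k hk => ?_
    simp only [Finset.mem_range] at hk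
    have hk' : t + 1 - k = (t - k) + 1 := by omega
    rw [hk', mul_left_comm, Nat.add_one_mul_choose_eq]
    ring
  have hsplit : ∑ k ∈ range (t + 1),
        (t + 1 - k) * ((m + 1).choose k * (m + 1).choose (t + 1 - k))
      = (t + 1) * (m + 1).choose (t + 1)
        + ∑ i ∈ Icc 1 t, (t + 1 - i) * ((m + 1).choose i * (m + 1).choose (t + 1 - i)) := by
    rw [Finset.sum_range_succ']
    simp only [Nat.sub_zero, Nat.choose_zero_right, one_mul]
    rw [Nat.add_comm]
    congr 1
    rw [← Finset.Ico_add_one_right_eq_Icc, Finset.sum_Ico_eq_sum_range]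
    exact Finset.sum_congr rfl fun j hj => by rw [Nat.add_comm 1 j]
  simpa [h2, key] using hsplit
end

section
/- Fix t ≥ 3 and α ∈ [(t−1)/t, t−1). For m sufficiently large and n = ⌈(6m/t)^{(t−1)/α}⌉, we have m ∈ [t(n−1)^{α/(t−1)}/6, t·n^{α/(t−1)}/6], and with d = ⌈n^{(t(α−1)+1)/(t−1)}⌉: C(2⌊t·n^{α/(t−1)}/6⌋ − 1, t−1) + (n−2m)(t−1)·d/(t(n−1)^{α/(t−1)}/6) < 6n^α. -/
/-!
Put `β = α/(t-1)` and `e = (t(α-1)+1)/(t-1)`, so that `(t-1)β = α`, `1 + e = α + β`, and `e ≥ 0`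
because `α ≥ (t-1)/t`. Since `2⌊t n^β/6⌋ - 1 ≤ t n^β/3`, the binomial term is at most
`c n^α` with `c = (t/3)^(t-1)/(t-1)!`; bounding `n - 2m` by `n`, the second term is at most
`6(t-1)/t · (⌈n^e⌉/n^e) · (n/(n-1))^β · n^α`. Both middle factors tend to `1`, so the
coefficient of `n^α` tends to `c + 6 - 6/t`, which is below `6` because
`t^t < 2·3^t·(t-1)!`: check `t ≤ 10` directly, then induct using `(1 + 1/n)^n ≤ e`.
-/

open Real Filter Topology
open scoped Nat

lemma add_one_pow_succ_le (n : ℕ) (hn : 10 ≤ n) : (n + 1) ^ (n + 1) ≤ 3 * n * n ^ n := by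
  have hn' : (10 : ℝ) ≤ n := by exact_mod_cast hn
  have hpow : ((n : ℝ) + 1) ^ n ≤ exp 1 * n ^ n := by
    calc ((n : ℝ) + 1) ^ n = (1 + (n : ℝ)⁻¹) ^ n * n ^ n := by
          rw [← mul_pow]; congr 1; field_simp
      _ ≤ exp 1 * n ^ n := by gcongr; exact one_add_inv_pow_le_exp
  have he := exp_one_lt_d9
  suffices ((n : ℝ) + 1) ^ (n + 1) ≤ 3 * n * n ^ n by exact_mod_cast this
  calc ((n : ℝ) + 1) ^ (n + 1) = (n + 1) * ((n : ℝ) + 1) ^ n := pow_succ' _ _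
    _ ≤ (n + 1) * (exp 1 * n ^ n) := by gcongr
    _ = (n + 1) * exp 1 * n ^ n := by ring
    _ ≤ 3 * n * n ^ n := mul_le_mul_of_nonneg_right (by nlinarith) (by positivity)

lemma pow_self_lt_two_mul_three_pow_mul_factorial {t : ℕ} (ht : 3 ≤ t) :
    t ^ t < 2 * 3 ^ t * (t - 1)! := by
  rcases lt_or_ge t 10 with h | h
  · interval_cases t <;> decide
  induction t, h using Nat.le_induction with
  | base => decide
  | succ n hn ih =>
    calc (n + 1) ^ (n + 1) ≤ 3 * n * n ^ n := add_one_pow_succ_le n hn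
      _ < 3 * n * (2 * 3 ^ n * (n - 1)!) := by gcongr; exact ih (by omega)
      _ = 2 * 3 ^ (n + 1) * (n + 1 - 1)! := by
        rw [Nat.add_sub_cancel, ← Nat.mul_factorial_pred (by omega : n ≠ 0)]; ring

lemma div_three_pow_div_factorial_lt {t : ℕ} (ht : 3 ≤ t) :
    ((t : ℝ) / 3) ^ (t - 1) / (t - 1)! < 6 / t := by
  obtain ⟨s, rfl⟩ : ∃ s, t = s + 1 := ⟨t - 1, by omega⟩
  have h := pow_self_lt_two_mul_three_pow_mul_factorial ht
  rw [Nat.add_sub_cancel] at h ⊢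
  rw [div_pow, div_div, div_lt_div_iff₀ (by positivity) (by positivity)]
  have h' : ((s : ℝ) + 1) ^ (s + 1) < 2 * 3 ^ (s + 1) * s ! := by exact_mod_cast h
  push_cast
  rw [pow_succ, pow_succ] at h'
  linarith

lemma tendsto_natCeil_rpow_div_rpow {e : ℝ} (he : 0 ≤ e) :
    Tendsto (fun n : ℕ => (⌈(n : ℝ) ^ e⌉₊ : ℝ) / (n : ℝ) ^ e) atTop (𝓝 1) := by
  rcases he.eq_or_lt with rfl | he
  · simp
  · exact tendsto_nat_ceil_div_atTop.comp
      ((tendsto_rpow_atTop he).comp tendsto_natCast_atTop_atTop)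

lemma tendsto_rpow_div_sub_one_rpow (β : ℝ) :
    Tendsto (fun n : ℕ => (n : ℝ) ^ β / ((n : ℝ) - 1) ^ β) atTop (𝓝 1) := by
  have h : Tendsto (fun n : ℕ => ((n : ℝ) / (n + -1)) ^ β) atTop (𝓝 1) := by
    simpa using (tendsto_natCast_div_add_atTop (-1 : ℝ)).rpow_const (Or.inl one_ne_zero)
  refine h.congr' ?_
  filter_upwards [eventually_ge_atTop 1] with n hn
  rw [← sub_eq_add_neg, div_rpow (Nat.cast_nonneg n) (by simpa using hn)]

lemma choose_two_mul_floor_sub_one_le {y : ℝ} (hy : 0 ≤ y) (r : ℕ) :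
    ((2 * ⌊y⌋₊ - 1).choose r : ℝ) ≤ (2 * y) ^ r / r ! := by
  have hk : ((2 * ⌊y⌋₊ - 1 : ℕ) : ℝ) ≤ 2 * y :=
    calc ((2 * ⌊y⌋₊ - 1 : ℕ) : ℝ) ≤ ((2 * ⌊y⌋₊ : ℕ) : ℝ) := by exact_mod_cast Nat.sub_le _ _
      _ ≤ 2 * y := by push_cast; linarith [Nat.floor_le hy]
  calc ((2 * ⌊y⌋₊ - 1).choose r : ℝ) ≤ ((2 * ⌊y⌋₊ - 1 : ℕ) : ℝ) ^ r / r ! :=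
        Nat.choose_le_pow_div r _
    _ ≤ (2 * y) ^ r / r ! := by gcongr

lemma rpow_inv_bounds_of_natCeil {a p : ℝ} (ha : 0 ≤ a) (hp : 0 < p) (h1 : 1 ≤ ⌈a ^ p⌉₊) :
    ((⌈a ^ p⌉₊ : ℝ) - 1) ^ p⁻¹ ≤ a ∧ a ≤ (⌈a ^ p⌉₊ : ℝ) ^ p⁻¹ := by
  have hap : 0 ≤ a ^ p := rpow_nonneg ha p
  have h1' : (1 : ℝ) ≤ ⌈a ^ p⌉₊ := by exact_mod_cast h1
  nth_rw 2 [← rpow_rpow_inv ha hp.ne']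
  nth_rw 3 [← rpow_rpow_inv ha hp.ne']
  constructor
  · exact rpow_le_rpow (by linarith) (by linarith [Nat.ceil_lt_add_one hap]) (inv_nonneg.2 hp.le)
  · exact rpow_le_rpow hap (Nat.le_ceil _) (inv_nonneg.2 hp.le)

lemma gadget_exponents {t : ℕ} {α : ℝ} (ht : 3 ≤ t) (hα : ((t : ℝ) - 1) / t ≤ α) :
    0 < α / ((t : ℝ) - 1) ∧ 0 ≤ ((t : ℝ) * (α - 1) + 1) / ((t : ℝ) - 1) ∧
      1 + ((t : ℝ) * (α - 1) + 1) / ((t : ℝ) - 1) = α + α / ((t : ℝ) - 1) := by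
  have ht' : (3 : ℝ) ≤ t := by exact_mod_cast ht
  have htα : (t : ℝ) - 1 ≤ t * α := by rwa [div_le_iff₀ (by positivity), mul_comm] at hα
  have ht1 : (t : ℝ) - 1 ≠ 0 := by linarith
  refine ⟨div_pos (by nlinarith) (by linarith), div_nonneg (by linarith) (by linarith), ?_⟩
  field_simp
  ring

lemma gadget_size_bounds {t m n : ℕ} {α : ℝ} (ht : (0 : ℝ) < t) (hβ : 0 < α / ((t : ℝ) - 1))
    (hn1 : 1 ≤ n) (hn : n = ⌈(6 * (m : ℝ) / t) ^ (((t : ℝ) - 1) / α)⌉₊) :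
    (t : ℝ) * ((n : ℝ) - 1) ^ (α / ((t : ℝ) - 1)) / 6 ≤ m ∧
      (m : ℝ) ≤ t * (n : ℝ) ^ (α / ((t : ℝ) - 1)) / 6 := by
  subst hn
  obtain ⟨hlow, hup⟩ := rpow_inv_bounds_of_natCeil (by positivity)
    (by rw [← inv_div]; positivity) hn1
  rw [inv_div, le_div_iff₀ ht] at hlow
  rw [inv_div, div_le_iff₀ ht] at hup
  constructor <;> linarith

lemma gadget_sum_le {t m n d : ℕ} {α β e : ℝ} (ht : 1 ≤ t) (hn : 2 ≤ n)
    (hβ : β * ((t : ℝ) - 1) = α) (hsum : 1 + e = α + β) :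
    ((2 * ⌊(t : ℝ) * (n : ℝ) ^ β / 6⌋₊ - 1).choose (t - 1) : ℝ)
        + ((n : ℝ) - 2 * m) * ((t : ℝ) - 1) * d / ((t : ℝ) * ((n : ℝ) - 1) ^ β / 6)
      ≤ (n : ℝ) ^ α * (((t : ℝ) / 3) ^ (t - 1) / (t - 1)!
        + 6 * ((t : ℝ) - 1) / t * ((d : ℝ) / (n : ℝ) ^ e * ((n : ℝ) ^ β / ((n : ℝ) - 1) ^ β))) := by
  have ht' : (1 : ℝ) ≤ t := by exact_mod_cast ht
  have hn' : (2 : ℝ) ≤ n := by exact_mod_cast hn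
  have hn0 : (0 : ℝ) < n := by linarith
  have hn1 : (0 : ℝ) < (n : ℝ) - 1 := by linarith
  have hchoose : ((2 * ⌊(t : ℝ) * (n : ℝ) ^ β / 6⌋₊ - 1).choose (t - 1) : ℝ)
      ≤ (n : ℝ) ^ α * (((t : ℝ) / 3) ^ (t - 1) / (t - 1)!) := by
    calc _ ≤ (2 * ((t : ℝ) * (n : ℝ) ^ β / 6)) ^ (t - 1) / (t - 1)! :=
          choose_two_mul_floor_sub_one_le (by positivity) _
      _ = ((t : ℝ) / 3) ^ (t - 1) * ((n : ℝ) ^ β) ^ (t - 1) / (t - 1)! := by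
          ring
      _ = _ := by
          rw [← rpow_natCast ((n : ℝ) ^ β), ← rpow_mul hn0.le, Nat.cast_sub ht, Nat.cast_one, hβ]
          ring
  have hrest : ((n : ℝ) - 2 * m) * ((t : ℝ) - 1) * d / ((t : ℝ) * ((n : ℝ) - 1) ^ β / 6)
      ≤ (n : ℝ) ^ α * (6 * ((t : ℝ) - 1) / t *
          ((d : ℝ) / (n : ℝ) ^ e * ((n : ℝ) ^ β / ((n : ℝ) - 1) ^ β))) := by
    have hpow : (n : ℝ) ^ α * (n : ℝ) ^ β = n * (n : ℝ) ^ e := by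
      rw [← rpow_add hn0, ← hsum, rpow_add hn0, rpow_one]
    calc _ ≤ (n : ℝ) * ((t : ℝ) - 1) * d / ((t : ℝ) * ((n : ℝ) - 1) ^ β / 6) := by
          gcongr
          linarith
      _ = _ := by
          field_simp
          rw [mul_assoc _ ((n : ℝ) ^ α), hpow]
          ring
  linarith

lemma eventually_gadget_ratio_lt_six {t : ℕ} {e : ℝ} (ht : 3 ≤ t) (he : 0 ≤ e) (β : ℝ) :
    ∀ᶠ n : ℕ in atTop, ((t : ℝ) / 3) ^ (t - 1) / (t - 1)!
        + 6 * ((t : ℝ) - 1) / t * ((⌈(n : ℝ) ^ e⌉₊ : ℝ) / (n : ℝ) ^ e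
          * ((n : ℝ) ^ β / ((n : ℝ) - 1) ^ β)) < 6 := by
  have hlim := tendsto_const_nhds (x := ((t : ℝ) / 3) ^ (t - 1) / (t - 1)!) |>.add
    (tendsto_const_nhds (x := 6 * ((t : ℝ) - 1) / t) |>.mul
      ((tendsto_natCeil_rpow_div_rpow he).mul (tendsto_rpow_div_sub_one_rpow β)))
  refine hlim.eventually_lt_const ?_
  have ht' : (0 : ℝ) < t := by exact_mod_cast (by omega : 0 < t)
  have hsplit : 6 * ((t : ℝ) - 1) / t = 6 - 6 / t := by field_simp
  rw [mul_one, mul_one, hsplit]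
  linarith [div_three_pow_div_factorial_lt ht]

theorem gadget_degree_bound_general (t : ℕ) (α : ℝ) (ht : 3 ≤ t)
    (hα1 : ((t : ℝ) - 1) / t ≤ α) :
    ∃ m0 : ℕ, ∀ m : ℕ, m0 ≤ m →
      ∀ n d : ℕ,
        n = ⌈(6 * (m : ℝ) / t) ^ (((t : ℝ) - 1) / α)⌉₊ →
        d = ⌈(n : ℝ) ^ (((t : ℝ) * (α - 1) + 1) / ((t : ℝ) - 1))⌉₊ →
        ((t : ℝ) * ((n : ℝ) - 1) ^ (α / ((t : ℝ) - 1)) / 6 ≤ (m : ℝ) ∧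
          (m : ℝ) ≤ (t : ℝ) * (n : ℝ) ^ (α / ((t : ℝ) - 1)) / 6) ∧
        ((2 * ⌊(t : ℝ) * (n : ℝ) ^ (α / ((t : ℝ) - 1)) / 6⌋₊ - 1).choose (t - 1) : ℝ)
            + ((n : ℝ) - 2 * m) * ((t : ℝ) - 1) * (d : ℝ)
              / ((t : ℝ) * ((n : ℝ) - 1) ^ (α / ((t : ℝ) - 1)) / 6)
          < 6 * (n : ℝ) ^ α := by
  obtain ⟨hβ, he, hsum⟩ := gadget_exponents ht hα1
  have ht3 : (3 : ℝ) ≤ t := by exact_mod_cast ht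
  have hsize : Tendsto (fun m : ℕ => ⌈(6 * (m : ℝ) / t) ^ (((t : ℝ) - 1) / α)⌉₊) atTop atTop :=
    tendsto_nat_ceil_atTop.comp <| (tendsto_rpow_atTop (by rw [← inv_div]; positivity)).comp <|
      (tendsto_natCast_atTop_atTop.const_mul_atTop (by norm_num)).atTop_div_const (by positivity)
  obtain ⟨m0, hm0⟩ := eventually_atTop.1 <| hsize.eventually <|
    (eventually_ge_atTop 2).and (eventually_gadget_ratio_lt_six ht he (α / ((t : ℝ) - 1)))
  refine ⟨m0, fun m hm n d hn hd => ?_⟩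
  obtain ⟨hn2, hratio⟩ := hn ▸ hm0 m hm
  refine ⟨gadget_size_bounds (by positivity) hβ (by omega) hn, ?_⟩
  have hαβ : α / ((t : ℝ) - 1) * ((t : ℝ) - 1) = α := div_mul_cancel₀ _ (by linarith)
  calc _ ≤ _ := gadget_sum_le (by omega) hn2 hαβ hsum
    _ < (n : ℝ) ^ α * 6 := by
        gcongr
        exact hd ▸ hratio
    _ = 6 * (n : ℝ) ^ α := mul_comm _ _

/-- The degree upper bound for `V_L`-vertices in the NP-hardness gadget: for `m`
sufficiently large, with `n = ⌈(6m/t)^{(t−1)/α}⌉` and `d = ⌈n^{(t(α−1)+1)/(t−1)}⌉`,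
we have `m ∈ [t(n−1)^{α/(t−1)}/6, t·n^{α/(t−1)}/6]` and
`C(2⌊t·n^{α/(t−1)}/6⌋ − 1, t−1) + (n−2m)(t−1)·d/(t(n−1)^{α/(t−1)}/6) < 6n^α`. -/
theorem gadget_degree_bound (t : ℕ) (α : ℝ) (ht : 3 ≤ t)
    (hα1 : ((t : ℝ) - 1) / t ≤ α) (hα2 : α < (t : ℝ) - 1) :
    ∃ m0 : ℕ, ∀ m : ℕ, m0 ≤ m →
      ∀ n d : ℕ,
        n = ⌈(6 * (m : ℝ) / t) ^ (((t : ℝ) - 1) / α)⌉₊ →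
        d = ⌈(n : ℝ) ^ (((t : ℝ) * (α - 1) + 1) / ((t : ℝ) - 1))⌉₊ →
        ((t : ℝ) * ((n : ℝ) - 1) ^ (α / ((t : ℝ) - 1)) / 6 ≤ (m : ℝ) ∧
          (m : ℝ) ≤ (t : ℝ) * (n : ℝ) ^ (α / ((t : ℝ) - 1)) / 6) ∧
        ((2 * ⌊(t : ℝ) * (n : ℝ) ^ (α / ((t : ℝ) - 1)) / 6⌋₊ - 1).choose (t - 1) : ℝ)
            + ((n : ℝ) - 2 * m) * ((t : ℝ) - 1) * (d : ℝ)
              / ((t : ℝ) * ((n : ℝ) - 1) ^ (α / ((t : ℝ) - 1)) / 6)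
          < 6 * (n : ℝ) ^ α :=
  gadget_degree_bound_general t α ht hα1
end
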